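/- arXiv:2009.12515 — 9 statements merged into one kernel-verified Lean document; each statement's English description precedes it below -/
import Mathlib

section
/- Let W : E → K be an isometry between finite-dimensional Hilbert spaces, X a self-adjoint operator on K, and A a self-adjoint operator on E. Then for every ε > 0 there exists z > 0 such that U*(X ⊕ A)U ≤ (W*XW + εI_E) ⊕ (2zI_K) in the Loewner order, where U is the unitary dilation [[W, (I-WW*)^{1/2}], [0, -W*]] of W. -/
/-!
With `P = (1 - W Wᴴ)^{1/2}` and `C = P X P + W A Wᴴ`, the difference of the two sides is the
block matrix `[[ε, -Wᴴ X P], [-P X W, 2z - C]]`. Its Schur complement with respect to the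
invertible corner `ε` is `2z - (C + ε⁻¹ (Wᴴ X P)ᴴ (Wᴴ X P))`, and a Hermitian matrix is
dominated by its operator norm times the identity, so a large enough `z` works.
-/

open Matrix
open scoped ComplexOrder

/-- The square root of a positive semidefinite matrix, as `Matrix.PosSemidef.sqrt` was defined
in Mathlib (December 2024); it has since been removed from Mathlib. -/
noncomputable def Matrix.PosSemidef.sqrt {n 𝕜 : Type*} [Fintype n] [DecidableEq n] [RCLike 𝕜]
    {A : Matrix n n 𝕜} (hA : A.PosSemidef) : Matrix n n 𝕜 :=
  hA.1.eigenvectorUnitary.1 * diagonal ((↑) ∘ (√·) ∘ hA.1.eigenvalues) *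
    (star hA.1.eigenvectorUnitary : Matrix n n 𝕜)

namespace Matrix

variable {m n 𝕜 : Type*} [Fintype m] [Fintype n] [RCLike 𝕜]

theorem PosSemidef.isHermitian_sqrt [DecidableEq n] {A : Matrix n n 𝕜} (hA : A.PosSemidef) :
    hA.sqrt.IsHermitian := by
  have hD : (diagonal ((↑) ∘ (√·) ∘ hA.1.eigenvalues) : Matrix n n 𝕜).IsHermitian :=
    isHermitian_diagonal_of_self_adjoint _ (by ext i; simp)
  simpa only [PosSemidef.sqrt, star_eq_conjTranspose] using
    isHermitian_mul_mul_conjTranspose hA.1.eigenvectorUnitary.1 hD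

theorem conjTranspose_dilation_mul_fromBlocks_mul_dilation (W : Matrix m n 𝕜) (P X : Matrix m m 𝕜)
    (A : Matrix n n 𝕜) :
    (fromBlocks W P 0 (-Wᴴ))ᴴ * fromBlocks X 0 0 A * fromBlocks W P 0 (-Wᴴ) =
      fromBlocks (Wᴴ * X * W) (Wᴴ * X * P) (Pᴴ * X * W) (Pᴴ * X * P + W * A * Wᴴ) := by
  simp [fromBlocks_conjTranspose, fromBlocks_multiply, Matrix.mul_assoc]

theorem posSemidef_fromBlocks_smul_one_iff [DecidableEq n] {ε : ℝ} (hε : 0 < ε)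
    (B : Matrix n m 𝕜) (D : Matrix m m 𝕜) :
    (fromBlocks ((ε : 𝕜) • 1) B Bᴴ D).PosSemidef ↔ (D - ε⁻¹ • (Bᴴ * B)).PosSemidef := by
  have hinv : (ε : 𝕜) • (1 : Matrix n n 𝕜) * ((ε⁻¹ : 𝕜) • 1) = 1 := by
    rw [smul_mul_smul_comm, mul_inv_cancel₀ (RCLike.ofReal_ne_zero.mpr hε.ne'), one_mul, one_smul]
  let := invertibleOfRightInverse _ _ hinv
  rw [PosDef.fromBlocks₁₁ B D (PosDef.one.smul (RCLike.ofReal_pos.mpr hε)), inv_eq_right_inv hinv,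
    Matrix.mul_smul, Matrix.mul_one, Matrix.smul_mul, RCLike.real_smul_eq_coe_smul (K := 𝕜),
    RCLike.ofReal_inv]

section
open scoped MatrixOrder Matrix.Norms.L2Operator

theorem IsHermitian.exists_pos_posSemidef_smul_one_sub [DecidableEq n] {H : Matrix n n ℂ}
    (hH : H.IsHermitian) : ∃ c : ℝ, 0 < c ∧ (c • (1 : Matrix n n ℂ) - H).PosSemidef := by
  refine ⟨‖H‖ + 1, by positivity, ?_⟩
  have hle : (algebraMap ℝ _ ‖H‖ - H).PosSemidef :=
    IsSelfAdjoint.le_algebraMap_norm_self hH.isSelfAdjoint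
  convert hle.add PosSemidef.one using 1
  rw [add_smul, one_smul, Algebra.algebraMap_eq_smul_one]
  abel

end

end Matrix

theorem stmt1_general (n m : ℕ) (W : Matrix (Fin m) (Fin n) ℂ)
    (h1 : (1 - W * Wᴴ).PosSemidef)
    (X : Matrix (Fin m) (Fin m) ℂ) (hX : X.IsHermitian)
    (A : Matrix (Fin n) (Fin n) ℂ) (hA : A.IsHermitian) :
    ∀ ε : ℝ, 0 < ε → ∃ z : ℝ, 0 < z ∧
      (Matrix.fromBlocks (Wᴴ * X * W + (ε : ℂ) • 1) 0 0 ((2 * z : ℝ) • (1 : Matrix (Fin m) (Fin m) ℂ)) -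
        (Matrix.fromBlocks W (Matrix.PosSemidef.sqrt h1) 0 (-Wᴴ))ᴴ * (Matrix.fromBlocks X 0 0 A) *
          (Matrix.fromBlocks W (Matrix.PosSemidef.sqrt h1) 0 (-Wᴴ))).PosSemidef := by
  intro ε hε
  set P := h1.sqrt
  have hP : Pᴴ = P := h1.isHermitian_sqrt
  set B := -(Wᴴ * X * P)
  set C := P * X * P + W * A * Wᴴ
  have hBH : Bᴴ = -(P * X * W) := by
    simp [B, conjTranspose_mul, hP, hX.eq, Matrix.mul_assoc]
  have hC : C.IsHermitian := by
    simpa only [hP] using (isHermitian_mul_mul_conjTranspose P hX).add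
      (isHermitian_mul_mul_conjTranspose W hA)
  obtain ⟨c, hc, hcH⟩ := (hC.add ((posSemidef_conjTranspose_mul_self B).smul
    (inv_nonneg.mpr hε.le)).1).exists_pos_posSemidef_smul_one_sub
  refine ⟨c / 2, half_pos hc, ?_⟩
  have hdiff : fromBlocks (Wᴴ * X * W + (ε : ℂ) • 1) 0 0 (c • 1) -
      (fromBlocks W P 0 (-Wᴴ))ᴴ * fromBlocks X 0 0 A * fromBlocks W P 0 (-Wᴴ) =
        fromBlocks ((ε : ℂ) • 1) B Bᴴ (c • 1 - C) := by
    rw [conjTranspose_dilation_mul_fromBlocks_mul_dilation, hP, hBH, sub_eq_add_neg,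
      fromBlocks_neg, fromBlocks_add]
    congr 1 <;> simp [B]
  rw [show 2 * (c / 2) = c by ring, hdiff]
  exact (posSemidef_fromBlocks_smul_one_iff hε B _).mpr (by rwa [sub_sub])

/-- for an isometry `W : E → K` between finite-dimensional Hilbert
spaces, self-adjoint `X` on `K` and self-adjoint `A` on `E`, for every `ε > 0`
there is `z > 0` with `Uᴴ (X ⊕ A) U ≤ (Wᴴ X W + ε I) ⊕ (2 z I)` in the Loewner
order, where `U = [[W, (1 - W Wᴴ)^{1/2}], [0, -Wᴴ]]` is the unitary dilation
of `W`. -/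
theorem stmt1 (n m : ℕ) (W : Matrix (Fin m) (Fin n) ℂ)
    (hW : Wᴴ * W = 1) (h1 : (1 - W * Wᴴ).PosSemidef)
    (X : Matrix (Fin m) (Fin m) ℂ) (hX : X.IsHermitian)
    (A : Matrix (Fin n) (Fin n) ℂ) (hA : A.IsHermitian) :
    ∀ ε : ℝ, 0 < ε → ∃ z : ℝ, 0 < z ∧
      (Matrix.fromBlocks (Wᴴ * X * W + (ε : ℂ) • 1) 0 0 ((2 * z : ℝ) • (1 : Matrix (Fin m) (Fin m) ℂ)) -
        (Matrix.fromBlocks W (Matrix.PosSemidef.sqrt h1) 0 (-Wᴴ))ᴴ * (Matrix.fromBlocks X 0 0 A) *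
          (Matrix.fromBlocks W (Matrix.PosSemidef.sqrt h1) 0 (-Wᴴ))).PosSemidef :=
  stmt1_general n m W h1 X hX A hA
end

section
/- Let f : (0,∞)^k → (0,∞) be globally operator monotone. Then f is concave as a real function on (0,∞)^k, and hence continuous. -/
open Matrix
open scoped ComplexOrder

/-- Square complex matrices of size `d`. -/
abbrev Mat (d : ℕ) := Matrix (Fin d) (Fin d) ℂ

/-- Loewner order: `A ≤ B` iff `B - A` is positive semi-definite. -/
def Loewner {d : ℕ} (A B : Mat d) : Prop := (B - A).PosSemidef

/-- The diagonal complex matrix with real entries `v`. -/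
noncomputable def cDiag {d : ℕ} (v : Fin d → ℝ) : Mat d :=
  Matrix.diagonal (fun j => (v j : ℂ))

/-- `JointDiag X U a` : the `k`-tuple `X` of matrices is jointly diagonalized by
the unitary `U` with (strictly positive) joint eigenvalue lists `a i`; this
encodes that `X` is a pairwise commuting `k`-tuple of positive invertible
operators together with a joint spectral decomposition `X i = Uᴴ (diag (a i)) U`. -/
def JointDiag {k d : ℕ} (X : Fin k → Mat d) (U : Mat d) (a : Fin k → Fin d → ℝ) : Prop :=
  U ∈ Matrix.unitaryGroup (Fin d) ℂ ∧ (∀ i j, 0 < a i j) ∧ ∀ i, X i = Uᴴ * cDiag (a i) * U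

/-- The value `f(X)` of a real function `f : (0,∞)^k → ℝ` on the commuting tuple
jointly diagonalized as `X i = Uᴴ (diag (a i)) U`, via joint functional calculus:
`f(X) = Uᴴ f(Λ) U`. -/
noncomputable def applyF {k d : ℕ} (f : (Fin k → ℝ) → ℝ) (U : Mat d)
    (a : Fin k → Fin d → ℝ) : Mat d :=
  Uᴴ * cDiag (fun j => f (fun i => a i j)) * U

/-- `f : (0,∞)^k → (0,∞)` is globally operator monotone: for all commuting
`k`-tuples `X ≤ Y` (coordinatewise Loewner order) of positive invertible
matrices, `f(X) ≤ f(Y)`, where `f` is applied through (any) joint spectral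
decompositions. -/
def GloballyOpMonotone (k : ℕ) (f : (Fin k → ℝ) → ℝ) : Prop :=
  (∀ x : Fin k → ℝ, (∀ i, 0 < x i) → 0 < f x) ∧
  ∀ (d : ℕ) (X Y : Fin k → Mat d) (U V : Mat d) (a b : Fin k → Fin d → ℝ),
    JointDiag X U a → JointDiag Y V b → (∀ i, Loewner (X i) (Y i)) →
    Loewner (applyF f U a) (applyF f V b)

/-!
For `t = c²`, `1 - t = s²` and the rotation `R = !![c, s; -s, c]`, the commuting tuple
`Xᵢ = Rᴴ diag(aᵢ, bᵢ) R` has diagonal `(t aᵢ + (1 - t) bᵢ, (1 - t) aᵢ + t bᵢ)` and off-diagonal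
entry `rᵢ = cs (aᵢ - bᵢ)`, so it lies below the diagonal tuple
`Yᵢ = diag(t aᵢ + (1 - t) bᵢ + ε, (1 - t) aᵢ + t bᵢ + rᵢ² / ε)`: the difference
`!![ε, -rᵢ; -rᵢ, rᵢ² / ε]` has rank one. The `(0,0)` entries of `f(X) ≤ f(Y)` give
`t f(a) + (1 - t) f(b) ≤ f(t a + (1 - t) b + ε)`.

To remove `ε`, apply this to `x - Δ` and `x` with weight `2δ/Δ` and shift `δ`; this gives
`f x ≤ f (x - δ) + C δ`. Shifting `a` and `b` down by `δ` and letting `δ → 0` then yields exact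
concavity, and a concave function on an open convex subset of `ℝᵏ` is continuous.
-/

open Filter Topology

noncomputable def symm2 (p q r : ℝ) : Mat 2 := !![(p : ℂ), q; q, r]

lemma symm2_sub (p q r p' q' r' : ℝ) :
    symm2 p q r - symm2 p' q' r' = symm2 (p - p') (q - q') (r - r') := by
  ext i j; fin_cases i <;> fin_cases j <;> simp [symm2]

lemma symm2_posSemidef_of_sq_eq {p q r : ℝ} (hp : 0 < p) (h : q ^ 2 = p * r) :
    (symm2 p q r).PosSemidef := by
  have hsq : (√p : ℂ) ^ 2 = p := by exact_mod_cast Real.sq_sqrt hp.le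
  have hr : (r : ℂ) * p = q ^ 2 := by exact_mod_cast (by linarith : r * p = q ^ 2)
  convert posSemidef_vecMulVec_self_star ![(√p : ℂ), q / √p] using 1
  ext i j
  fin_cases i <;> fin_cases j <;> simp [symm2, vecMulVec_apply, Complex.conj_ofReal] <;>
    field_simp <;> simp only [hsq, hr]

lemma cDiag_fin_two (v : Fin 2 → ℝ) : cDiag v = symm2 (v 0) 0 (v 1) := by
  ext i j; fin_cases i <;> fin_cases j <;> simp [cDiag, symm2]

noncomputable def rot (c s : ℝ) : Mat 2 := !![(c : ℂ), s; -s, c]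

lemma rot_mem_unitaryGroup {c s : ℝ} (h : c ^ 2 + s ^ 2 = 1) :
    rot c s ∈ unitaryGroup (Fin 2) ℂ := by
  have hC : (c : ℂ) ^ 2 + (s : ℂ) ^ 2 = 1 := by exact_mod_cast h
  rw [mem_unitaryGroup_iff]
  ext i j
  fin_cases i <;> fin_cases j <;>
    simp [rot, mul_apply, Fin.sum_univ_two, Complex.conj_ofReal] <;>
    first | ring1 | linear_combination hC

lemma rot_conjTranspose_mul_cDiag_mul (c s : ℝ) (v : Fin 2 → ℝ) :
    (rot c s)ᴴ * cDiag v * rot c s =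
      symm2 (c ^ 2 * v 0 + s ^ 2 * v 1) (c * s * (v 0 - v 1)) (s ^ 2 * v 0 + c ^ 2 * v 1) := by
  ext i j
  fin_cases i <;> fin_cases j <;>
    simp [rot, cDiag, symm2, mul_apply, Fin.sum_univ_two, Complex.conj_ofReal] <;> ring

lemma GloballyOpMonotone.sq_mul_add_sq_mul_le {k : ℕ} {f : (Fin k → ℝ) → ℝ}
    (hf : GloballyOpMonotone k f) {a b : Fin k → ℝ} (ha : ∀ i, 0 < a i) (hb : ∀ i, 0 < b i)
    {c s : ℝ} (hcs : c ^ 2 + s ^ 2 = 1) {ε : ℝ} (hε : 0 < ε) :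
    c ^ 2 * f a + s ^ 2 * f b ≤ f (fun i => c ^ 2 * a i + s ^ 2 * b i + ε) := by
  set r : Fin k → ℝ := fun i => c * s * (a i - b i)
  set A : Fin k → Fin 2 → ℝ := fun i => ![a i, b i]
  set B : Fin k → Fin 2 → ℝ :=
    fun i => ![c ^ 2 * a i + s ^ 2 * b i + ε, s ^ 2 * a i + c ^ 2 * b i + r i ^ 2 / ε]
  have hA : JointDiag (fun i => (rot c s)ᴴ * cDiag (A i) * rot c s) (rot c s) A :=
    ⟨rot_mem_unitaryGroup hcs, fun i j => by fin_cases j <;> simp [A, ha i, hb i], fun i => rfl⟩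
  have hB : JointDiag (fun i => (1 : Mat 2)ᴴ * cDiag (B i) * 1) 1 B := by
    refine ⟨one_mem _, fun i j => ?_, fun i => rfl⟩
    have hai := ha i
    have hbi := hb i
    fin_cases j
    · simp only [B, Fin.zero_eta, cons_val_zero]; positivity
    · have : 0 < s ^ 2 * a i + c ^ 2 * b i := by
        nlinarith [mul_le_mul_of_nonneg_left (min_le_left (a i) (b i)) (sq_nonneg s),
          mul_le_mul_of_nonneg_left (min_le_right (a i) (b i)) (sq_nonneg c), lt_min (ha i) (hb i)]
      simp only [B, Fin.mk_one, cons_val_one, cons_val_fin_one]; positivity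
  have hAB : ∀ i, Loewner ((rot c s)ᴴ * cDiag (A i) * rot c s) ((1 : Mat 2)ᴴ * cDiag (B i) * 1) := by
    intro i
    rw [Loewner, rot_conjTranspose_mul_cDiag_mul, conjTranspose_one, one_mul, mul_one,
      cDiag_fin_two, symm2_sub]
    convert symm2_posSemidef_of_sq_eq hε (q := -r i) (r := r i ^ 2 / ε) (by field_simp) using 2 <;>
      simp [A, B, r]
  have h00 := (hf.2 2 _ _ _ _ _ _ hA hB hAB).diag_nonneg (i := 0)
  rw [applyF, applyF, rot_conjTranspose_mul_cDiag_mul, conjTranspose_one, one_mul, mul_one,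
    cDiag_fin_two, symm2_sub] at h00
  simp [symm2, A, B] at h00
  exact_mod_cast h00

def ConcaveUpToShift {ι : Type*} (f : (ι → ℝ) → ℝ) : Prop :=
  ∀ a b : ι → ℝ, (∀ i, 0 < a i) → (∀ i, 0 < b i) → ∀ t : ℝ, 0 ≤ t → t ≤ 1 → ∀ ε : ℝ, 0 < ε →
    t * f a + (1 - t) * f b ≤ f (fun i => t * a i + (1 - t) * b i + ε)

theorem GloballyOpMonotone.concaveUpToShift {k : ℕ} {f : (Fin k → ℝ) → ℝ}
    (hf : GloballyOpMonotone k f) : ConcaveUpToShift f := by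
  intro a b ha hb t ht0 ht1 ε hε
  have hcs : √t ^ 2 + √(1 - t) ^ 2 = 1 := by
    rw [Real.sq_sqrt ht0, Real.sq_sqrt (sub_nonneg.2 ht1)]; ring
  simpa only [Real.sq_sqrt ht0, Real.sq_sqrt (sub_nonneg.2 ht1)] using
    hf.sq_mul_add_sq_mul_le ha hb hcs hε

lemma eventually_forall_sub_pos {ι : Type*} [Finite ι] {x : ι → ℝ} (hx : ∀ i, 0 < x i) :
    ∀ᶠ δ in 𝓝[>] (0 : ℝ), ∀ i, 0 < x i - δ :=
  eventually_all.2 fun i =>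
    (eventually_lt_nhds (hx i)).filter_mono nhdsWithin_le_nhds |>.mono fun _ => sub_pos.2

lemma setOf_forall_pos_eq_univ_pi {ι : Type*} :
    {x : ι → ℝ | ∀ i, 0 < x i} = Set.univ.pi fun _ => Set.Ioi 0 := by
  ext; simp

lemma isOpen_setOf_forall_pos {ι : Type*} [Finite ι] : IsOpen {x : ι → ℝ | ∀ i, 0 < x i} := by
  rw [setOf_forall_pos_eq_univ_pi]
  exact isOpen_set_pi Set.finite_univ fun _ _ => isOpen_Ioi

namespace ConcaveUpToShift

variable {ι : Type*} [Finite ι] {f : (ι → ℝ) → ℝ}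

lemma exists_eventually_le_sub_add_mul (hf : ConcaveUpToShift f) {x : ι → ℝ}
    (hx : ∀ i, 0 < x i) :
    ∃ C, ∀ᶠ δ in 𝓝[>] (0 : ℝ), f x ≤ f (fun i => x i - δ) + C * δ := by
  obtain ⟨Δ, hxΔ, hΔ⟩ := ((eventually_forall_sub_pos hx).and self_mem_nhdsWithin).exists
  refine ⟨2 * (f x - f (fun i => x i - Δ)) / Δ, ?_⟩
  filter_upwards [Ioo_mem_nhdsGT (half_pos hΔ)] with δ ⟨hδ0, hδΔ⟩
  have hs : 2 * δ / Δ ≤ 1 := by rw [div_le_one hΔ]; linarith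
  have key := hf _ x hxΔ hx (2 * δ / Δ) (by positivity) hs δ hδ0
  have harg : (fun i => 2 * δ / Δ * (x i - Δ) + (1 - 2 * δ / Δ) * x i + δ) = fun i => x i - δ := by
    funext i; field_simp; ring
  rw [harg] at key
  have hC : 2 * (f x - f (fun i => x i - Δ)) / Δ * δ
      = 2 * δ / Δ * (f x - f (fun i => x i - Δ)) := by ring
  linarith

theorem mul_add_mul_le_apply (hf : ConcaveUpToShift f) {a b : ι → ℝ} (ha : ∀ i, 0 < a i)
    (hb : ∀ i, 0 < b i) {t : ℝ} (ht0 : 0 ≤ t) (ht1 : t ≤ 1) :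
    t * f a + (1 - t) * f b ≤ f (fun i => t * a i + (1 - t) * b i) := by
  obtain ⟨Ca, hCa⟩ := hf.exists_eventually_le_sub_add_mul ha
  obtain ⟨Cb, hCb⟩ := hf.exists_eventually_le_sub_add_mul hb
  set m : ι → ℝ := fun i => t * a i + (1 - t) * b i
  have hlim : Tendsto (fun δ => f m + (t * Ca + (1 - t) * Cb) * δ) (𝓝[>] 0) (𝓝 (f m)) :=
    tendsto_nhdsWithin_of_tendsto_nhds (Continuous.tendsto' (by fun_prop) 0 _ (by simp))
  refine ge_of_tendsto hlim ?_
  filter_upwards [hCa, hCb, eventually_forall_sub_pos ha, eventually_forall_sub_pos hb,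
    self_mem_nhdsWithin] with δ hδa hδb ha' hb' hδ
  have key := hf _ _ ha' hb' t ht0 ht1 δ hδ
  have harg : (fun i => t * (a i - δ) + (1 - t) * (b i - δ) + δ) = m := by
    funext i; simp only [m]; ring
  rw [harg] at key
  linarith [mul_le_mul_of_nonneg_left hδa ht0, mul_le_mul_of_nonneg_left hδb (sub_nonneg.2 ht1)]

theorem concaveOn (hf : ConcaveUpToShift f) : ConcaveOn ℝ {x : ι → ℝ | ∀ i, 0 < x i} f := by
  refine ⟨setOf_forall_pos_eq_univ_pi (ι := ι) ▸ convex_pi fun _ _ => convex_Ioi 0,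
    fun x hx y hy p q hp hq hpq => ?_⟩
  obtain rfl : q = 1 - p := by linarith
  exact hf.mul_add_mul_le_apply hx hy hp (by linarith)

end ConcaveUpToShift

/-- a globally operator monotone `f : (0,∞)^k → (0,∞)` is concave
on `(0,∞)^k`, and hence continuous there. -/
theorem stmt4 (k : ℕ) (f : (Fin k → ℝ) → ℝ) (hf : GloballyOpMonotone k f) :
    (∀ a b : Fin k → ℝ, (∀ i, 0 < a i) → (∀ i, 0 < b i) →
      ∀ t : ℝ, 0 ≤ t → t ≤ 1 →
        t * f a + (1 - t) * f b ≤ f (fun i => t * a i + (1 - t) * b i)) ∧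
    ContinuousOn f {x | ∀ i, 0 < x i} :=
  ⟨fun _ _ ha hb _ ht0 ht1 => hf.concaveUpToShift.mul_add_mul_le_apply ha hb ht0 ht1,
    hf.concaveUpToShift.concaveOn.continuousOn isOpen_setOf_forall_pos⟩
end

section
/- Let f : (0,∞)^k → (0,∞) be globally operator monotone and define f⁺(X) := inf_{ε>0} f(X + εI) for commuting k-tuples X of positive invertible matrices. Then f⁺ = f on (0,∞)^k; in particular f is right-continuous along the directions X + εI. -/
open Matrix
open scoped ComplexOrder

open Filter Topology

/-!
Monotonicity in each variable gives `f x ≤ f (x + δ)`. For the converse, conjugate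
`diag (x + δ, x - t)` (with `0 < δ < t < x`) by a rotation with `cos² = δ / t`: the result lies
below `diag (y, x)` for a suitable `y`, the gap being a positive rank-one matrix. Comparing the
second diagonal entries of `f` of both sides gives `(t - δ) f (x + δ) + δ f (x - t) ≤ t f x`,
so `f (x + δ) - f x = O(δ)`.
-/

lemma Loewner.diag_le {d : ℕ} {A B : Mat d} (h : Loewner A B) (j : Fin d) : A j j ≤ B j j :=
  sub_nonneg.1 (by simpa using h.diag_nonneg (i := j))

lemma loewner_cDiag {d : ℕ} {v w : Fin d → ℝ} (h : ∀ j, v j ≤ w j) :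
    Loewner (cDiag v) (cDiag w) := by
  unfold Loewner cDiag
  rw [diagonal_sub, posSemidef_diagonal_iff]
  exact fun j => sub_nonneg.2 (mod_cast h j)

lemma jointDiag_cDiag {k d : ℕ} {a : Fin k → Fin d → ℝ} (ha : ∀ i j, 0 < a i j) :
    JointDiag (fun i => cDiag (a i)) 1 a :=
  ⟨one_mem _, ha, fun i => by simp⟩

lemma applyF_one {k d : ℕ} (f : (Fin k → ℝ) → ℝ) (a : Fin k → Fin d → ℝ) :
    applyF f 1 a = cDiag fun j => f fun i => a i j := by
  simp [applyF]

def rotMat (c s : ℝ) : Mat 2 := !![(c : ℂ), s; -s, c]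

lemma rotMat_mem_unitaryGroup {c s : ℝ} (hcs : c ^ 2 + s ^ 2 = 1) :
    rotMat c s ∈ unitaryGroup (Fin 2) ℂ := by
  have hcsC : (c : ℂ) ^ 2 + (s : ℂ) ^ 2 = 1 := mod_cast hcs
  rw [mem_unitaryGroup_iff]
  ext i j
  fin_cases i <;> fin_cases j <;> simp [rotMat, Matrix.mul_apply, Fin.sum_univ_two] <;>
    first | ring1 | linear_combination hcsC

lemma rotMat_conj_cDiag (c s p q : ℝ) :
    (rotMat c s)ᴴ * cDiag ![p, q] * rotMat c s =
      !![((c ^ 2 * p + s ^ 2 * q : ℝ) : ℂ), ((c * s * (p - q) : ℝ) : ℂ);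
        ((c * s * (p - q) : ℝ) : ℂ), ((s ^ 2 * p + c ^ 2 * q : ℝ) : ℂ)] := by
  ext i j
  fin_cases i <;> fin_cases j <;>
    simp [rotMat, cDiag, Matrix.mul_apply, Fin.sum_univ_two, Complex.conj_ofReal] <;> ring

lemma loewner_rotMat_conj_cDiag {c s u ε : ℝ} (hcs : c ^ 2 + s ^ 2 = 1)
    (hu : u * c = s * (c ^ 2 + 1)) (hε : 0 ≤ ε) (x : ℝ) :
    Loewner ((rotMat c s)ᴴ * cDiag ![x + ε * c ^ 2, x - ε] * rotMat c s)
      (cDiag ![x + ε * (c ^ 4 - s ^ 2 + u ^ 2), x]) := by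
  have hgap : cDiag ![x + ε * (c ^ 4 - s ^ 2 + u ^ 2), x] -
      (rotMat c s)ᴴ * cDiag ![x + ε * c ^ 2, x - ε] * rotMat c s =
      (ε : ℂ) • vecMulVec ![(u : ℂ), -(c : ℂ) ^ 2] (star ![(u : ℂ), -(c : ℂ) ^ 2]) := by
    have huC : (u : ℂ) * c = s * (c ^ 2 + 1) := mod_cast hu
    have hcsC : (c : ℂ) ^ 2 + (s : ℂ) ^ 2 = 1 := mod_cast hcs
    rw [rotMat_conj_cDiag]
    ext i j
    fin_cases i <;> fin_cases j <;>
      simp [cDiag, vecMulVec, Complex.conj_ofReal]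
    · linear_combination (-(x : ℂ)) * hcsC
    · linear_combination (-(ε : ℂ) * c) * huC
    · linear_combination (-(ε : ℂ) * c) * huC
    · linear_combination (-(x : ℂ) - ε * c ^ 2) * hcsC
  unfold Loewner
  rw [hgap]
  exact (posSemidef_vecMulVec_self_star _).smul (mod_cast hε)

namespace GloballyOpMonotone

variable {k : ℕ} {f : (Fin k → ℝ) → ℝ}

lemma mono (hf : GloballyOpMonotone k f) {y z : Fin k → ℝ} (hy : ∀ i, 0 < y i)
    (hyz : ∀ i, y i ≤ z i) : f y ≤ f z := by
  have h := (hf.2 1 _ _ 1 1 (fun i _ => y i) (fun i _ => z i)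
    (jointDiag_cDiag fun i _ => hy i) (jointDiag_cDiag fun i _ => (hy i).trans_le (hyz i))
    fun i => loewner_cDiag fun _ => hyz i).diag_le 0
  simpa [applyF_one, cDiag] using h

lemma sq_mul_add_sq_mul_le_s5 (hf : GloballyOpMonotone k f) {x : Fin k → ℝ} {c s ε : ℝ}
    (hcs : c ^ 2 + s ^ 2 = 1) (hc : c ≠ 0) (hε : 0 < ε) (hx : ∀ i, ε < x i) :
    s ^ 2 * f (fun i => x i + ε * c ^ 2) + c ^ 2 * f (fun i => x i - ε) ≤ f x := by
  set u := s * (c ^ 2 + 1) / c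
  have hu : u * c = s * (c ^ 2 + 1) := div_mul_cancel₀ _ hc
  set a : Fin k → Fin 2 → ℝ := fun i => ![x i + ε * c ^ 2, x i - ε]
  set b : Fin k → Fin 2 → ℝ := fun i => ![x i + ε * (c ^ 4 - s ^ 2 + u ^ 2), x i]
  have hs : s ^ 2 ≤ 1 := by nlinarith
  have ha : ∀ i j, 0 < a i j := fun i j => by
    fin_cases j
    · show 0 < x i + ε * c ^ 2
      linarith [hx i, mul_nonneg hε.le (sq_nonneg c)]
    · show 0 < x i - ε
      linarith [hx i]
  have hb : ∀ i j, 0 < b i j := fun i j => by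
    fin_cases j
    · show 0 < x i + ε * (c ^ 4 - s ^ 2 + u ^ 2)
      nlinarith [hx i, sq_nonneg u, sq_nonneg (c ^ 2)]
    · show 0 < x i
      linarith [hx i]
  have hfa : applyF f (rotMat c s) a = (rotMat c s)ᴴ *
      cDiag ![f fun i => x i + ε * c ^ 2, f fun i => x i - ε] * rotMat c s := by
    unfold applyF; congr; funext j; fin_cases j <;> rfl
  have h := (hf.2 2 _ _ _ 1 a b ⟨rotMat_mem_unitaryGroup hcs, ha, fun i => rfl⟩
    (jointDiag_cDiag hb) fun i => loewner_rotMat_conj_cDiag hcs hu hε.le (x i)).diag_le 1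
  rw [hfa, rotMat_conj_cDiag, applyF_one] at h
  simp only [cDiag, b, diagonal_apply_eq, of_apply, cons_val_one, cons_val_zero] at h
  exact_mod_cast h

lemma apply_add_le (hf : GloballyOpMonotone k f) {x : Fin k → ℝ} {δ t : ℝ} (hδ : 0 < δ)
    (hδt : δ < t) (hx : ∀ i, t < x i) :
    f (fun i => x i + δ) ≤ f x + δ * (f x - f fun i => x i - t) / (t - δ) := by
  have ht : 0 < t := hδ.trans hδt
  have hc : (√(δ / t)) ^ 2 = δ / t := Real.sq_sqrt (by positivity)
  have hs : (√(1 - δ / t)) ^ 2 = 1 - δ / t :=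
    Real.sq_sqrt (sub_nonneg.2 ((div_le_one ht).2 hδt.le))
  have h := hf.sq_mul_add_sq_mul_le_s5 (c := √(δ / t)) (s := √(1 - δ / t)) (by rw [hc, hs]; ring)
    (Real.sqrt_pos.2 (by positivity)).ne' ht hx
  rw [hc, hs, mul_div_cancel₀ _ ht.ne'] at h
  rw [← sub_le_iff_le_add', le_div_iff₀ (sub_pos.2 hδt)]
  field_simp at h
  linarith

lemma tendsto_apply_add_nhdsGT (hf : GloballyOpMonotone k f) {x : Fin k → ℝ}
    (hx : ∀ i, 0 < x i) :
    Tendsto (fun ε : ℝ => f fun i => x i + ε) (𝓝[>] 0) (𝓝 (f x)) := by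
  have hmargin : ∀ᶠ t in 𝓝[>] (0 : ℝ), ∀ i, t < x i :=
    eventually_nhdsWithin_of_eventually_nhds (eventually_all.2 fun i => eventually_lt_nhds (hx i))
  obtain ⟨t, htx, ht : 0 < t⟩ := (hmargin.and self_mem_nhdsWithin).exists
  have hupper : Tendsto (fun δ => f x + δ * (f x - f fun i => x i - t) / (t - δ)) (𝓝[>] 0)
      (𝓝 (f x)) := by
    have : ContinuousAt (fun δ => f x + δ * (f x - f fun i => x i - t) / (t - δ)) 0 := by
      fun_prop (disch := simpa using ht.ne')
    simpa using this.tendsto.mono_left nhdsWithin_le_nhds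
  refine tendsto_of_tendsto_of_tendsto_of_le_of_le' tendsto_const_nhds hupper ?_ ?_
  · filter_upwards [self_mem_nhdsWithin] with ε (hε : 0 < ε)
    exact hf.mono hx fun i => by linarith
  · filter_upwards [Ioo_mem_nhdsGT ht] with δ hδ
    exact hf.apply_add_le hδ.1 hδ.2 htx

end GloballyOpMonotone

/-- for a globally operator monotone `f : (0,∞)^k → (0,∞)`, the
right-regularization `f⁺(x) := inf_{ε>0} f(x + ε·1)` coincides with `f` on
`(0,∞)^k`; in particular `f` is right-continuous along the directions `x + ε·1`. -/
theorem stmt5 (k : ℕ) (f : (Fin k → ℝ) → ℝ) (hf : GloballyOpMonotone k f) :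
    ∀ x : Fin k → ℝ, (∀ i, 0 < x i) →
      (⨅ ε : {ε : ℝ // 0 < ε}, f (fun i => x i + (ε : ℝ))) = f x ∧
      Filter.Tendsto (fun ε : ℝ => f (fun i => x i + ε))
        (nhdsWithin 0 (Set.Ioi 0)) (nhds (f x)) := by
  intro x hx
  have hlim := hf.tendsto_apply_add_nhdsGT hx
  have hle : ∀ ε : {ε : ℝ // 0 < ε}, f x ≤ f fun i => x i + ε :=
    fun ε => hf.mono hx fun i => le_add_of_nonneg_right ε.2.le
  refine ⟨le_antisymm (ge_of_tendsto hlim ?_) (le_ciInf hle), hlim⟩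
  filter_upwards [self_mem_nhdsWithin] with ε hε
  exact ciInf_le ⟨f x, Set.forall_mem_range.2 hle⟩ ⟨ε, hε⟩
end

section
/- Let f : (0,∞)^k → (0,∞) be globally operator monotone. Then the Jensen-type inequality W*f(X)W ≤ f(W*XW) holds also for contractions W : E → K (‖W‖ ≤ 1) between finite-dimensional Hilbert spaces, with the convention f(0) := 0, whenever X is a commuting k-tuple of positive invertible operators on K and W*XW is a commuting k-tuple of positive invertible operators on E. -/
open Matrix
open scoped ComplexOrder

/-!
Fix `0 < c < 1` and choose `P` with `Pᴴ P = 1 - c Wᴴ W`; then `J = [√c W; P]` is an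
isometry `E → K ⊕ E`. For the commuting tuple `S = X ⊕ α` with a small scalar `α > 0`, the
compression `Jᴴ S J = c Wᴴ X W + α Pᴴ P` lies strictly below `Wᴴ X W`. Extending `J` to a
unitary `Q`, the tuple `Qᴴ S Q` is therefore dominated (by a Schur complement estimate) by the
commuting tuple `r ⊕ Wᴴ X W` for large scalars `r`. Global monotonicity, followed by
compression to the `E`-corner, gives `c Wᴴ f(X) W + f(α) Pᴴ P ≤ f(Wᴴ X W)`; drop the positive
term and let `c → 1`. The small `α > 0` stands in for the choice `A = 0`, which lies outside
the domain of `f`.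
-/

open scoped MatrixOrder Matrix.Norms.L2Operator Topology

theorem exists_pos_forall_le {ι : Type*} [Finite ι] {b : ι → ℝ} (hb : ∀ j, 0 < b j) :
    ∃ μ > 0, ∀ j, μ ≤ b j := by
  cases isEmpty_or_nonempty ι
  · exact ⟨1, one_pos, isEmptyElim⟩
  · obtain ⟨j₀, hj₀⟩ := Finite.exists_min b
    exact ⟨b j₀, hb j₀, hj₀⟩

namespace Matrix

variable {m n : Type*} [Fintype m] [Fintype n] [DecidableEq m] [DecidableEq n]

theorem IsHermitian.exists_posSemidef_smul_one_sub {H : Matrix n n ℂ} (hH : H.IsHermitian) :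
    ∃ r : ℝ, 0 < r ∧ (r • (1 : Matrix n n ℂ) - H).PosSemidef := by
  refine ⟨‖H‖ + 1, by positivity, ?_⟩
  calc H ≤ algebraMap ℝ (Matrix n n ℂ) ‖H‖ := IsSelfAdjoint.le_algebraMap_norm_self hH
    _ ≤ (‖H‖ + 1) • 1 := by
      rw [Algebra.algebraMap_eq_smul_one]
      exact smul_le_smul_of_nonneg_right (by linarith) PosSemidef.one.nonneg

theorem PosSemidef.fromBlocks_zero {A : Matrix m m ℂ} {D : Matrix n n ℂ}
    (hA : A.PosSemidef) (hD : D.PosSemidef) : (fromBlocks A 0 0 D).PosSemidef := by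
  obtain ⟨B, rfl⟩ := CStarAlgebra.nonneg_iff_eq_star_mul_self.mp hA.nonneg
  obtain ⟨C, rfl⟩ := CStarAlgebra.nonneg_iff_eq_star_mul_self.mp hD.nonneg
  simpa [star_eq_conjTranspose, fromBlocks_conjTranspose, fromBlocks_multiply] using
    posSemidef_conjTranspose_mul_self (fromBlocks B 0 0 C)

omit [DecidableEq m] in
theorem posSemidef_fromBlocks_inv_smul (B : Matrix m n ℂ) {δ : ℝ} (hδ : 0 < δ) :
    (fromBlocks (δ⁻¹ • (B * Bᴴ)) (-B) (-Bᴴ) (δ • 1)).PosSemidef := by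
  have hR : fromBlocks (δ⁻¹ • (B * Bᴴ)) (-B) (-Bᴴ) (δ • 1)
      = δ⁻¹ • (fromRows B (-(δ • 1)) * (fromRows B (-(δ • 1)))ᴴ) := by
    rw [conjTranspose_fromRows_eq_fromCols_conjTranspose, fromRows_mul_fromCols,
      fromBlocks_smul]
    congr 1 <;> simp [smul_smul, hδ.ne']
  rw [hR]
  exact (posSemidef_self_mul_conjTranspose _).smul (inv_nonneg.mpr hδ.le)

theorem exists_posSemidef_fromBlocks_sub {A : Matrix m m ℂ} (hA : A.IsHermitian)
    (B : Matrix m n ℂ) {D T : Matrix n n ℂ} {δ : ℝ} (hδ : 0 < δ)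
    (hT : (T - (D + δ • 1)).PosSemidef) :
    ∃ r : ℝ, 0 < r ∧ (fromBlocks (r • 1) 0 0 T - fromBlocks A B Bᴴ D).PosSemidef := by
  have hH : (A + δ⁻¹ • (B * Bᴴ)).IsHermitian :=
    hA.add ((posSemidef_self_mul_conjTranspose B).smul (inv_nonneg.mpr hδ.le)).isHermitian
  obtain ⟨r, hr, hrH⟩ := hH.exists_posSemidef_smul_one_sub
  refine ⟨r, hr, ?_⟩
  have hsplit : fromBlocks (r • 1) 0 0 T - fromBlocks A B Bᴴ D
      = fromBlocks (r • 1 - (A + δ⁻¹ • (B * Bᴴ))) 0 0 (T - (D + δ • 1))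
        + fromBlocks (δ⁻¹ • (B * Bᴴ)) (-B) (-Bᴴ) (δ • 1) := by
    rw [sub_eq_add_neg, fromBlocks_neg, fromBlocks_add, fromBlocks_add]
    congr 1 <;> abel
  rw [hsplit]
  exact (hrH.fromBlocks_zero hT).add (posSemidef_fromBlocks_inv_smul B hδ)

theorem exists_mem_unitaryGroup_submatrix_eq {ι κ : Type*} [Fintype ι] [DecidableEq ι]
    [Fintype κ] [DecidableEq κ] {g : κ → ι} (hg : g.Injective) {V : Matrix ι κ ℂ}
    (hV : Vᴴ * V = 1) : ∃ Q ∈ unitaryGroup ι ℂ, Q.submatrix id g = V := by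
  let col : κ → EuclideanSpace ℂ ι := fun j => WithLp.toLp 2 fun p => V p j
  have hcol : Orthonormal ℂ col := by
    rw [orthonormal_iff_ite]
    intro i j
    simpa [col, PiLp.inner_apply, Matrix.mul_apply, one_apply, mul_comm] using
      congrFun (congrFun hV i) j
  have hv : Orthonormal ℂ ((Set.range g).domRestrict (Function.extend g col 0)) := by
    convert hcol.comp _ (Equiv.ofInjective g hg).symm.injective
    ext x
    obtain ⟨_, j, rfl⟩ := x
    simp [hg.extend_apply]
  obtain ⟨b, hb⟩ := hv.exists_orthonormalBasis_extension_of_card_eq finrank_euclideanSpace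
  refine ⟨(EuclideanSpace.basisFun ι ℂ).toBasis.toMatrix b,
    (EuclideanSpace.basisFun ι ℂ).toMatrix_orthonormalBasis_mem_unitary b, ?_⟩
  ext p j
  simp [Module.Basis.toMatrix_apply, hb (g j) ⟨j, rfl⟩, hg.extend_apply, col]

theorem submatrix_conjTranspose_mul_mul {ι κ : Type*} [Fintype ι] (Q M : Matrix ι ι ℂ)
    (g : κ → ι) :
    (Qᴴ * M * Q).submatrix g g = (Q.submatrix id g)ᴴ * M * Q.submatrix id g := by
  ext i j
  simp [Matrix.mul_apply]

theorem posSemidef_sub_of_forall_lt_one {A B : Matrix n n ℂ}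
    (h : ∀ c : ℝ, 0 < c → c < 1 → (B - c • A).PosSemidef) : (B - A).PosSemidef := by
  have hlim : Filter.Tendsto (fun c : ℝ => B - c • A) (𝓝[<] 1) (𝓝 (B - A)) := by
    have : Continuous fun c : ℝ => B - c • A := by fun_prop
    simpa using (this.tendsto 1).mono_left nhdsWithin_le_nhds
  refine (isClosed_Ici.mem_of_tendsto hlim ?_).posSemidef
  filter_upwards [Ioo_mem_nhdsLT zero_lt_one] with c hc
  exact (h c hc.1 hc.2).nonneg

end Matrix

noncomputable def blockSum {m n : ℕ} (A : Mat m) (D : Mat n) : Mat (m + n) :=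
  reindex finSumFinEquiv finSumFinEquiv (fromBlocks A 0 0 D)

section blockSum

variable {m n : ℕ}

theorem blockSum_mul_blockSum (A A' : Mat m) (D D' : Mat n) :
    blockSum A D * blockSum A' D' = blockSum (A * A') (D * D') := by
  simp [blockSum, fromBlocks_multiply]

theorem conjTranspose_blockSum (A : Mat m) (D : Mat n) :
    (blockSum A D)ᴴ = blockSum Aᴴ Dᴴ := by
  simp [blockSum, fromBlocks_conjTranspose]

@[simp] theorem blockSum_one : blockSum (1 : Mat m) (1 : Mat n) = 1 := by
  simp [blockSum, fromBlocks_one]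

theorem blockSum_submatrix_natAdd (A : Mat m) (D : Mat n) :
    (blockSum A D).submatrix (Fin.natAdd m) (Fin.natAdd m) = D := by
  ext i j
  simp [blockSum]

theorem cDiag_append (a : Fin m → ℝ) (b : Fin n → ℝ) :
    cDiag (Fin.append a b) = blockSum (cDiag a) (cDiag b) := by
  rw [blockSum, cDiag, cDiag, cDiag, fromBlocks_diagonal, reindex_apply, submatrix_diagonal_equiv]
  congr 1
  ext p
  induction p using Fin.addCases <;> simp

theorem conjTranspose_fromRows_submatrix_mul_blockSum {l : ℕ} (R₁ : Matrix (Fin m) (Fin l) ℂ)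
    (R₂ : Matrix (Fin n) (Fin l) ℂ) (A : Mat m) (D : Mat n) :
    ((fromRows R₁ R₂).submatrix finSumFinEquiv.symm id)ᴴ * blockSum A D *
        (fromRows R₁ R₂).submatrix finSumFinEquiv.symm id
      = R₁ᴴ * A * R₁ + R₂ᴴ * D * R₂ := by
  rw [blockSum, reindex_apply, conjTranspose_submatrix, submatrix_mul_equiv,
    submatrix_mul_equiv, submatrix_id_id, conjTranspose_fromRows_eq_fromCols_conjTranspose,
    fromCols_mul_fromBlocks, fromCols_mul_fromRows]
  simp [Matrix.mul_assoc]

end blockSum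

section JointDiag

variable {k m n : ℕ}

theorem applyF_mul (f : (Fin k → ℝ) → ℝ) (U Q : Mat n) (a : Fin k → Fin n → ℝ) :
    applyF f (U * Q) a = Qᴴ * applyF f U a * Q := by
  simp only [applyF, conjTranspose_mul, Matrix.mul_assoc]

theorem applyF_blockSum (f : (Fin k → ℝ) → ℝ) (U : Mat m) (V : Mat n)
    (a : Fin k → Fin m → ℝ) (b : Fin k → Fin n → ℝ) :
    applyF f (blockSum U V) (fun i => Fin.append (a i) (b i))
      = blockSum (applyF f U a) (applyF f V b) := by
  have hf : (fun j => f fun i => Fin.append (a i) (b i) j)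
      = Fin.append (fun j => f fun i => a i j) (fun j => f fun i => b i j) := by
    ext p
    induction p using Fin.addCases <;> simp
  simp only [applyF, hf, cDiag_append, conjTranspose_blockSum, blockSum_mul_blockSum]

theorem cDiag_const (r : ℝ) : cDiag (fun _ => r) = r • (1 : Mat n) := by
  ext i j
  simp [cDiag, diagonal_apply, one_apply]

theorem applyF_one_const (f : (Fin k → ℝ) → ℝ) (α : Fin k → ℝ) :
    applyF f (1 : Mat n) (fun i _ => α i) = f α • 1 := by
  simp [applyF, cDiag_const]

theorem jointDiag_smul_one {α : Fin k → ℝ} (hα : ∀ i, 0 < α i) :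
    JointDiag (fun i => α i • (1 : Mat n)) 1 (fun i _ => α i) :=
  ⟨one_mem _, fun i _ => hα i, fun i => by simp [cDiag_const]⟩

variable {X : Fin k → Mat n} {U : Mat n} {a : Fin k → Fin n → ℝ}

theorem JointDiag.isHermitian (hX : JointDiag X U a) (i : Fin k) : (X i).IsHermitian := by
  have hD : (cDiag (a i)).IsHermitian := by
    simp [cDiag, IsHermitian, diagonal_conjTranspose]
  rw [hX.2.2 i]
  exact isHermitian_conjTranspose_mul_mul U hD

theorem JointDiag.conj (hX : JointDiag X U a) {Q : Mat n} (hQ : Q ∈ unitaryGroup (Fin n) ℂ) :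
    JointDiag (fun i => Qᴴ * X i * Q) (U * Q) a :=
  ⟨mul_mem hX.1 hQ, hX.2.1, fun i => by
    simp only [hX.2.2 i, conjTranspose_mul, Matrix.mul_assoc]⟩

theorem JointDiag.blockSum (hX : JointDiag X U a) {Y : Fin k → Mat m} {V : Mat m}
    {b : Fin k → Fin m → ℝ} (hY : JointDiag Y V b) :
    JointDiag (fun i => blockSum (X i) (Y i)) (blockSum U V)
      (fun i => Fin.append (a i) (b i)) := by
  refine ⟨?_, fun i p => ?_, fun i => ?_⟩
  · rw [mem_unitaryGroup_iff', star_eq_conjTranspose, conjTranspose_blockSum,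
      blockSum_mul_blockSum, ← star_eq_conjTranspose, ← star_eq_conjTranspose,
      mem_unitaryGroup_iff'.mp hX.1, mem_unitaryGroup_iff'.mp hY.1, blockSum_one]
  · induction p using Fin.addCases <;> simp [hX.2.1, hY.2.1]
  · dsimp only
    rw [hX.2.2 i, hY.2.2 i, cDiag_append, conjTranspose_blockSum, blockSum_mul_blockSum,
      blockSum_mul_blockSum]

theorem JointDiag.posSemidef_sub_smul_one (hX : JointDiag X U a) {μ : ℝ} {i : Fin k}
    (hμ : ∀ j, μ ≤ a i j) : (X i - μ • 1).PosSemidef := by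
  have hU : Uᴴ * U = 1 := mem_unitaryGroup_iff'.mp hX.1
  have h : X i - μ • 1 = Uᴴ * cDiag (fun j => a i j - μ) * U := by
    have hD : cDiag (fun j => a i j - μ) = cDiag (a i) - μ • 1 := by
      rw [← cDiag_const]
      ext p q
      by_cases hpq : p = q <;> simp [cDiag, hpq]
    rw [hD, Matrix.mul_sub, Matrix.sub_mul, ← hX.2.2 i, Matrix.mul_smul, Matrix.mul_one,
      Matrix.smul_mul, hU]
  rw [h]
  refine PosSemidef.conjTranspose_mul_mul_same ?_ U
  simp [cDiag, hμ]

end JointDiag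

theorem GloballyOpMonotone.loewner_isometry_conj {k m n : ℕ} {f : (Fin k → ℝ) → ℝ}
    (hf : GloballyOpMonotone k f) {S : Fin k → Mat (m + n)} {U : Mat (m + n)}
    {a : Fin k → Fin (m + n) → ℝ} (hS : JointDiag S U a) {T : Fin k → Mat n} {V : Mat n}
    {b : Fin k → Fin n → ℝ} (hT : JointDiag T V b) {J : Matrix (Fin (m + n)) (Fin n) ℂ}
    (hJ : Jᴴ * J = 1) {δ : ℝ} (hδ : 0 < δ)
    (hST : ∀ i, Loewner (Jᴴ * S i * J + δ • 1) (T i)) :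
    Loewner (Jᴴ * applyF f U a * J) (applyF f V b) := by
  obtain ⟨Q, hQ, rfl⟩ := exists_mem_unitaryGroup_submatrix_eq (Fin.natAdd_injective n m) hJ
  have hdom (i : Fin k) :
      ∃ r : ℝ, 0 < r ∧ Loewner (Qᴴ * S i * Q) (blockSum (r • 1) (T i)) := by
    set M := reindex finSumFinEquiv.symm finSumFinEquiv.symm (Qᴴ * S i * Q)
    have hM : M.IsHermitian := ((hS.conj hQ).isHermitian i).submatrix _
    have hB : M.toBlocks₂₁ = M.toBlocks₁₂ᴴ := by
      conv_lhs => rw [← hM.eq]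
      rfl
    have h22 : M.toBlocks₂₂
        = (Q.submatrix id (Fin.natAdd m))ᴴ * S i * Q.submatrix id (Fin.natAdd m) := by
      rw [← submatrix_conjTranspose_mul_mul]
      ext
      simp [M, toBlocks₂₂]
    obtain ⟨r, hr, h⟩ := exists_posSemidef_fromBlocks_sub
      (show M.toBlocks₁₁.IsHermitian from hM.submatrix Sum.inl) M.toBlocks₁₂ hδ
      (h22 ▸ hST i)
    rw [← hB, fromBlocks_toBlocks] at h
    refine ⟨r, hr, ?_⟩
    convert h.submatrix finSumFinEquiv.symm using 1
    rw [submatrix_sub]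
    simp [Loewner, blockSum, M]
  choose r hr hle using hdom
  have hmono := hf.2 _ _ _ _ _ _ _ (hS.conj hQ) ((jointDiag_smul_one hr).blockSum hT) hle
  rw [applyF_mul, applyF_blockSum, applyF_one_const] at hmono
  simpa [Loewner, submatrix_sub, blockSum_submatrix_natAdd, submatrix_conjTranspose_mul_mul]
    using hmono.submatrix (Fin.natAdd m)

theorem GloballyOpMonotone.loewner_smul_conj {k dE dK : ℕ} {f : (Fin k → ℝ) → ℝ}
    (hf : GloballyOpMonotone k f) {W : Matrix (Fin dK) (Fin dE) ℂ}
    (hW : (1 - Wᴴ * W).PosSemidef) {X : Fin k → Mat dK} {U : Mat dK}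
    {a : Fin k → Fin dK → ℝ} (hX : JointDiag X U a) {V : Mat dE}
    {b : Fin k → Fin dE → ℝ} (hWXW : JointDiag (fun i => Wᴴ * X i * W) V b) {c : ℝ}
    (hc0 : 0 < c) (hc1 : c < 1) :
    Loewner (c • (Wᴴ * applyF f U a * W)) (applyF f V b) := by
  obtain ⟨μ, hμ, hμb⟩ := exists_pos_forall_le fun p : Fin k × Fin dE => hWXW.2.1 p.1 p.2
  set α := (1 - c) * μ / 2 with hα_def
  have hα : 0 < α := by
    have := sub_pos.mpr hc1
    positivity
  have hG : (1 - c • (Wᴴ * W)).PosSemidef := by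
    have h : 1 - c • (Wᴴ * W) = (1 - c) • 1 + c • (1 - Wᴴ * W) := by module
    rw [h]
    exact (PosSemidef.one.smul (by linarith)).add (hW.smul hc0.le)
  obtain ⟨P, hP⟩ := CStarAlgebra.nonneg_iff_eq_star_mul_self.mp hG.nonneg
  rw [star_eq_conjTranspose] at hP
  set J := (fromRows (√c • W) P).submatrix finSumFinEquiv.symm id
  have hconj (A : Mat dK) (D : Mat dE) :
      Jᴴ * blockSum A D * J = c • (Wᴴ * A * W) + Pᴴ * D * P := by
    rw [conjTranspose_fromRows_submatrix_mul_blockSum]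
    simp [smul_smul, Real.mul_self_sqrt hc0.le]
  have hJ : Jᴴ * J = 1 := by
    simpa [← hP] using hconj 1 1
  have hST (i : Fin k) :
      Loewner (Jᴴ * blockSum (X i) (α • 1 : Mat dE) * J + α • 1) (Wᴴ * X i * W) := by
    have h : Wᴴ * X i * W - (Jᴴ * blockSum (X i) (α • 1 : Mat dE) * J + (α • 1 : Mat dE))
        = (1 - c) • (Wᴴ * X i * W - μ • 1) + (α * c) • (Wᴴ * W) := by
      rw [hconj, Matrix.mul_smul, Matrix.smul_mul, Matrix.mul_one, ← hP, hα_def]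
      module
    rw [Loewner, h]
    exact ((hWXW.posSemidef_sub_smul_one fun j => hμb (i, j)).smul (by linarith)).add
      ((posSemidef_conjTranspose_mul_self W).smul (by positivity))
  have h := hf.loewner_isometry_conj
    (hX.blockSum (jointDiag_smul_one fun _ : Fin k => hα)) hWXW hJ hα hST
  rw [applyF_blockSum, applyF_one_const, hconj] at h
  have hfα : 0 < f fun _ => α := hf.1 _ fun _ => hα
  exact (le_add_of_nonneg_right
    ((PosSemidef.one.smul hfα.le).conjTranspose_mul_mul_same P).nonneg).trans h

/-- for a globally operator monotone `f : (0,∞)^k → (0,∞)` the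
Jensen-type inequality `Wᴴ f(X) W ≤ f(Wᴴ X W)` holds also for contractions
`W : E → K` (`‖W‖ ≤ 1`, i.e. `1 - Wᴴ W ≥ 0`) between finite-dimensional Hilbert
spaces (with the convention `f(0) := 0`), whenever `X` is a commuting `k`-tuple
of positive invertible operators on `K` and `Wᴴ X W` is a commuting `k`-tuple of
positive invertible operators on `E`. -/
theorem stmt6 (k : ℕ) (f : (Fin k → ℝ) → ℝ) (hf : GloballyOpMonotone k f)
    (dE dK : ℕ) (W : Matrix (Fin dK) (Fin dE) ℂ)
    (hW : (1 - Wᴴ * W).PosSemidef)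
    (X : Fin k → Mat dK) (U : Mat dK) (a : Fin k → Fin dK → ℝ)
    (hX : JointDiag X U a)
    (V : Mat dE) (b : Fin k → Fin dE → ℝ)
    (hWXW : JointDiag (fun i => Wᴴ * X i * W) V b) :
    Loewner (Wᴴ * applyF f U a * W) (applyF f V b) :=
  posSemidef_sub_of_forall_lt_one fun _ hc0 hc1 => hf.loewner_smul_conj hW hX hWXW hc0 hc1
end

section
/- For every finite-dimensional Hilbert space E, the matrix convex hull of the collection of commuting k-tuples of positive invertible operators equals the set of all (not necessarily commuting) k-tuples of positive invertible operators: co^mat(CP^k)(E) = P^k(E). -/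
open Matrix
open scoped ComplexOrder

/-!
Diagonalize each `X i = U i * D i * (U i)ᴴ`. The isometry `v ↦ k^{-1/2} ((U 1)ᴴ v, …, (U k)ᴴ v)`
compresses a block diagonal matrix `Z 1 ⊕ ⋯ ⊕ Z k` to the average `k⁻¹ ∑ U m * Z m * (U m)ᴴ`.
Choose `0 < ε i` below the spectrum of `X i`, and let `x i` carry `ε i + k (D i - ε i)` in block `i`
and the scalar `ε i` in every other block: all blocks are diagonal, so the `x i` commute, are
positive definite, and compress to `X i`. Conversely, compressing a positive definite matrix by
an isometry keeps it positive definite.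
-/

theorem Finite.exists_pos_forall_le {ι : Type*} [Finite ι] {f : ι → ℝ} (hf : ∀ i, 0 < f i) :
    ∃ ε > 0, ∀ i, ε ≤ f i := by
  cases isEmpty_or_nonempty ι
  · exact ⟨1, one_pos, isEmptyElim⟩
  · obtain ⟨i, hi⟩ := Finite.exists_min f
    exact ⟨f i, hf i, hi⟩

namespace Matrix

variable {m n ι R : Type*}

def stackRows (W : ι → Matrix m n R) : Matrix (m × ι) n R :=
  of fun p b => W p.2 p.1 b

theorem conjTranspose_stackRows_mul_blockDiagonal_mul_stackRows [Fintype m] [Fintype ι]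
    [DecidableEq ι] [Semiring R] [StarRing R] (W : ι → Matrix m n R) (Z : ι → Matrix m m R) :
    (stackRows W)ᴴ * blockDiagonal Z * stackRows W = ∑ i, (W i)ᴴ * Z i * W i := by
  ext b c
  simp only [mul_apply, sum_apply, conjTranspose_apply, blockDiagonal_apply, stackRows,
    of_apply, Fintype.sum_prod_type, mul_ite, mul_zero, Finset.sum_mul, ite_mul, zero_mul]
  rw [Finset.sum_comm]
  refine Finset.sum_congr rfl fun i _ => ?_
  rw [Finset.sum_comm]
  simp only [Finset.sum_ite_eq', Finset.mem_univ, ↓reduceIte]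
  exact Finset.sum_comm

theorem exists_fin_commuting_compression {κ : Type*} [Fintype m] [DecidableEq m]
    [DecidableEq n] {X : κ → Matrix n n ℂ} (x : κ → Matrix m m ℂ) (V : Matrix m n ℂ)
    (hV : Vᴴ * V = 1) (hx : ∀ i, (x i).PosDef) (hcomm : ∀ i j, Commute (x i) (x j))
    (hX : ∀ i, X i = Vᴴ * x i * V) :
    ∃ (d' : ℕ) (x : κ → Matrix (Fin d') (Fin d') ℂ) (V : Matrix (Fin d') n ℂ),
      Vᴴ * V = 1 ∧ (∀ i, (x i).PosDef) ∧ (∀ i j, Commute (x i) (x j)) ∧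
        ∀ i, X i = Vᴴ * x i * V := by
  set e := (Fintype.equivFin m).symm
  refine ⟨Fintype.card m, fun i => (x i).submatrix e e, V.submatrix e id, ?_,
    fun i => (hx i).submatrix e.injective, fun i j => ?_, fun i => ?_⟩
  · rw [conjTranspose_submatrix, submatrix_mul_equiv, hV, submatrix_id_id]
  · rw [Commute, SemiconjBy, submatrix_mul_equiv, submatrix_mul_equiv, (hcomm i j).eq]
  · rw [conjTranspose_submatrix, submatrix_mul_equiv, submatrix_mul_equiv, submatrix_id_id,
      hX i]

variable [Fintype n] [DecidableEq n] [Fintype ι] [DecidableEq ι]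

noncomputable def averagingIsometry (U : ι → unitary (Matrix n n ℂ)) : Matrix (n × ι) n ℂ :=
  stackRows fun i => (((√(Fintype.card ι))⁻¹ : ℝ) : ℂ) • star (U i : Matrix n n ℂ)

theorem conjTranspose_averagingIsometry_mul_blockDiagonal_mul (U : ι → unitary (Matrix n n ℂ))
    (Z : ι → Matrix n n ℂ) :
    (averagingIsometry U)ᴴ * blockDiagonal Z * averagingIsometry U =
      (Fintype.card ι : ℂ)⁻¹ • ∑ i, Unitary.conjStarAlgAut ℂ _ (U i) (Z i) := by
  have hc : (((√(Fintype.card ι))⁻¹ : ℝ) : ℂ) * (((√(Fintype.card ι))⁻¹ : ℝ) : ℂ) =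
      (Fintype.card ι : ℂ)⁻¹ := by
    rw [← Complex.ofReal_mul, ← mul_inv, Real.mul_self_sqrt (Nat.cast_nonneg _),
      Complex.ofReal_inv, Complex.ofReal_natCast]
  rw [averagingIsometry, conjTranspose_stackRows_mul_blockDiagonal_mul_stackRows, Finset.smul_sum]
  refine Finset.sum_congr rfl fun i _ => ?_
  simp only [conjTranspose_smul, Complex.star_def, Complex.conj_ofReal, smul_mul,
    Matrix.mul_smul, smul_smul, hc, star_eq_conjTranspose, conjTranspose_conjTranspose,
    Unitary.conjStarAlgAut_apply]

theorem conjTranspose_averagingIsometry_mul_self [Nonempty ι] (U : ι → unitary (Matrix n n ℂ)) :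
    (averagingIsometry U)ᴴ * averagingIsometry U = 1 := by
  have h := conjTranspose_averagingIsometry_mul_blockDiagonal_mul U 1
  simp only [blockDiagonal_one, Matrix.mul_one, Pi.one_apply, map_one, Finset.sum_const,
    Finset.card_univ] at h
  rw [h, ← Nat.cast_smul_eq_nsmul ℂ, smul_smul, inv_mul_cancel₀ (by simp), one_smul]

theorem exists_eq_average_conj_diagonal [Nonempty ι] {X : ι → Matrix n n ℂ}
    (hX : ∀ i, (X i).PosDef) :
    ∃ (U : ι → unitary (Matrix n n ℂ)) (z : ι → ι → n → ℝ), (∀ i j a, 0 < z i j a) ∧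
      ∀ i, X i = (Fintype.card ι : ℂ)⁻¹ •
        ∑ j, Unitary.conjStarAlgAut ℂ _ (U j) (diagonal fun a => (z i j a : ℂ)) := by
  choose ε hε hεle using fun i => Finite.exists_pos_forall_le (hX i).eigenvalues_pos
  set k := Fintype.card ι
  refine ⟨fun j => (hX j).1.eigenvectorUnitary,
    fun i j a => ε i + if j = i then k * ((hX i).1.eigenvalues a - ε i) else 0, ?_, fun i => ?_⟩
  · intro i j a
    have := mul_nonneg k.cast_nonneg (sub_nonneg.2 (hεle i a))
    exact add_pos_of_pos_of_nonneg (hε i) (by split_ifs <;> simp [this])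
  have hdiag : ∀ j, diagonal (fun a => ((ε i + if j = i then k * ((hX i).1.eigenvalues a - ε i)
      else 0 : ℝ) : ℂ)) = (ε i : ℂ) • 1 + if j = i then (k : ℂ) •
        (diagonal (RCLike.ofReal ∘ (hX i).1.eigenvalues) - (ε i : ℂ) • 1) else 0 := by
    intro j
    split_ifs <;> ext a b <;> by_cases hab : a = b <;> simp [hab]
  simp_rw [hdiag, map_add, Finset.sum_add_distrib, apply_ite (Unitary.conjStarAlgAut ℂ _ _),
    map_zero, Finset.sum_ite_eq', Finset.mem_univ, if_true]
  simp only [map_smul, map_sub, map_one, ← (hX i).1.spectral_theorem, Finset.sum_const,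
    Finset.card_univ, ← Nat.cast_smul_eq_nsmul ℂ, smul_smul]
  rw [← smul_smul, ← smul_add, add_sub_cancel, smul_smul, inv_mul_cancel₀ (by simp [k]), one_smul]

end Matrix

/-- the matrix convex hull of the collection of commuting
`k`-tuples of positive invertible operators equals the set of all (not
necessarily commuting) `k`-tuples of positive invertible operators:
`co^mat(CP^k)(E) = P^k(E)`. An element of the matrix convex hull at dimension
`d` is precisely `Vᴴ x V` for a commuting positive invertible tuple `x` on some
finite-dimensional `K` and an isometry `V : E → K`. -/
theorem stmt7 (k d : ℕ) (X : Fin k → Mat d) :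
    (∀ i, (X i).PosDef) ↔
      ∃ (d' : ℕ) (x : Fin k → Mat d') (V : Matrix (Fin d') (Fin d) ℂ),
        Vᴴ * V = 1 ∧ (∀ i, (x i).PosDef) ∧ (∀ i j, Commute (x i) (x j)) ∧
        ∀ i, X i = Vᴴ * x i * V := by
  refine ⟨fun hX => ?_, fun ⟨d', x, V, hV, hx, _, hXV⟩ i => ?_⟩
  · rcases isEmpty_or_nonempty (Fin k) with _ | _
    · exact ⟨d, isEmptyElim, 1, by simp, isEmptyElim, isEmptyElim, isEmptyElim⟩
    obtain ⟨U, z, hz, hXz⟩ := exists_eq_average_conj_diagonal hX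
    refine exists_fin_commuting_compression
      (fun i => blockDiagonal fun j => diagonal fun a => (z i j a : ℂ)) (averagingIsometry U)
      (conjTranspose_averagingIsometry_mul_self U) (fun i => ?_) (fun i j => ?_) (fun i => ?_)
    · rw [blockDiagonal_diagonal, posDef_diagonal_iff]
      exact fun p => by exact_mod_cast hz i p.2 p.1
    · simp only [blockDiagonal_diagonal]
      exact commute_diagonal _ _
    · rw [conjTranspose_averagingIsometry_mul_blockDiagonal_mul, hXz i]
  · have hV_injective : Function.Injective V.mulVec :=
      Function.LeftInverse.injective (g := Vᴴ.mulVec) fun v => by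
        rw [mulVec_mulVec, hV, one_mulVec]
    exact hXV i ▸ (hx i).conjTranspose_mul_mul_same hV_injective
end

section
/- Every positive invertible operator A on a finite-dimensional Hilbert space E can be written as a finite convex combination of operators of the form U*(c₁ ⊕ c₂I)U with U unitary and c₁, c₂ > 0 scalars; more precisely, A is a finite convex combination of operators of the form c·uu* + d·I_E with c, d > 0 and u a unit vector, and each such operator equals U*((c+d) ⊕ dI)U for a suitable unitary U. -/
/-!
Diagonalise `A = ∑ⱼ aⱼ vⱼvⱼᴴ` in an orthonormal eigenbasis and fix `0 < ε < min aⱼ`. Since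
`∑ⱼ vⱼvⱼᴴ = 1`, the uniform average over `j` of `n(aⱼ - ε) vⱼvⱼᴴ + ε·1` is `A - ε·1 + ε·1 = A`.
For the second part, extend the unit vector `u` to an orthonormal basis `b` with `b i = u`; the
unitary `V` with columns `b j` turns `diagonal d` into `∑ⱼ dⱼ bⱼbⱼᴴ`, which for
`d = (c + e) ⊕ e` is `c·uuᴴ + e·1`.
-/

open Matrix
open scoped ComplexOrder

namespace Matrix

variable {m n α : Type*} [Fintype n] [CommSemiring α] [StarRing α]

theorem mul_diagonal_mul_conjTranspose_eq_sum [DecidableEq n] (V : Matrix m n α) (d : n → α) :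
    V * diagonal d * Vᴴ = ∑ j, d j • vecMulVec (V.col j) (star (V.col j)) := by
  ext i k
  rw [mul_apply]
  simp only [mul_diagonal, conjTranspose_apply, sum_apply, smul_apply, col_apply,
    vecMulVec_apply, Pi.star_apply, smul_eq_mul]
  exact Finset.sum_congr rfl fun j _ => by ring

end Matrix

namespace OrthonormalBasis

variable {𝕜 ι : Type*} [RCLike 𝕜] [Fintype ι]

theorem sum_vecMulVec_self_star [DecidableEq ι] (b : OrthonormalBasis ι 𝕜 (EuclideanSpace 𝕜 ι)) :
    ∑ j, vecMulVec (b j) (star (b j)) = 1 := by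
  have := mul_diagonal_mul_conjTranspose_eq_sum
    ((EuclideanSpace.basisFun ι 𝕜).toBasis.toMatrix b) fun _ => 1
  rw [diagonal_one, mul_one, toMatrix_orthonormalBasis_self_mul_conjTranspose] at this
  simp only [one_smul] at this
  exact this.symm

theorem star_dotProduct_self (b : OrthonormalBasis ι 𝕜 (EuclideanSpace 𝕜 ι)) (j : ι) :
    star (b j : ι → 𝕜) ⬝ᵥ b j = 1 := by
  rw [dotProduct_comm, ← EuclideanSpace.inner_eq_star_dotProduct]
  simp

end OrthonormalBasis

theorem EuclideanSpace.exists_orthonormalBasis_apply_eq {𝕜 ι : Type*} [RCLike 𝕜] [Fintype ι]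
    {u : ι → 𝕜} (hu : star u ⬝ᵥ u = 1) (i : ι) :
    ∃ b : OrthonormalBasis ι 𝕜 (EuclideanSpace 𝕜 ι), ⇑(b i) = u := by
  classical
  have hv : Orthonormal 𝕜 (({i} : Set ι).domRestrict fun _ => WithLp.toLp 2 u) := by
    rw [orthonormal_iff_ite]
    rintro ⟨j, rfl⟩ ⟨k, rfl⟩
    rw [if_pos rfl, Set.domRestrict_apply, EuclideanSpace.inner_toLp_toLp, dotProduct_comm, hu]
  obtain ⟨b, hb⟩ := hv.exists_orthonormalBasis_extension_of_card_eq (by simp)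
  exact ⟨b, by rw [hb i rfl]⟩

theorem Matrix.IsHermitian.eq_sum_eigenvalues_smul_vecMulVec {𝕜 n : Type*} [RCLike 𝕜] [Fintype n]
    [DecidableEq n] {A : Matrix n n 𝕜} (hA : A.IsHermitian) :
    A = ∑ j, (hA.eigenvalues j : 𝕜) •
      vecMulVec (hA.eigenvectorBasis j) (star (hA.eigenvectorBasis j)) := by
  conv_lhs => rw [hA.spectral_theorem, Unitary.conjStarAlgAut_apply, star_eq_conjTranspose]
  exact mul_diagonal_mul_conjTranspose_eq_sum _ _

theorem sum_ofReal_smul_eq_uniform_average {𝕜 ι M : Type*} [RCLike 𝕜] [Fintype ι] [Nonempty ι]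
    [AddCommGroup M] [Module 𝕜 M] (a : ι → ℝ) (P : ι → M) (ε : ℝ) :
    ∑ j, (a j : 𝕜) • P j = ∑ j, (((Fintype.card ι : ℝ)⁻¹ : ℝ) : 𝕜) •
      (((Fintype.card ι * (a j - ε) : ℝ) : 𝕜) • P j + (ε : 𝕜) • ∑ k, P k) := by
  have hN : (Fintype.card ι : 𝕜) ≠ 0 := by simp
  simp only [smul_add, smul_smul, Finset.sum_add_distrib, Finset.sum_const, Finset.card_univ,
    ← Nat.cast_smul_eq_nsmul 𝕜]
  push_cast
  simp only [inv_mul_cancel_left₀ hN, mul_inv_cancel_left₀ hN, sub_smul, Finset.sum_sub_distrib,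
    ← Finset.smul_sum, sub_add_cancel]

theorem Matrix.PosDef.exists_uniform_average_smul_vecMulVec_add_smul_one {𝕜 ι : Type*} [RCLike 𝕜]
    [Fintype ι] [DecidableEq ι] [Nonempty ι] {A : Matrix ι ι 𝕜} (hA : A.PosDef) :
    ∃ (t c e : ι → ℝ) (u : ι → ι → 𝕜),
      (∀ j, 0 < t j) ∧ (∑ j, t j = 1) ∧ (∀ j, 0 < c j) ∧ (∀ j, 0 < e j) ∧
      (∀ j, star (u j) ⬝ᵥ u j = 1) ∧
      A = ∑ j, (t j : 𝕜) • ((c j : 𝕜) • vecMulVec (u j) (star (u j)) + (e j : 𝕜) • 1) := by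
  set N : ℝ := (Fintype.card ι : ℝ)
  have hN : 0 < N := Nat.cast_pos.mpr Fintype.card_pos
  set a := hA.isHermitian.eigenvalues
  set b := hA.isHermitian.eigenvectorBasis
  obtain ⟨j₀, hj₀⟩ := Finite.exists_min a
  have ha₀ : 0 < a j₀ := hA.eigenvalues_pos j₀
  set ε := a j₀ / 2
  have hε : 0 < ε := half_pos ha₀
  have hεa : ∀ j, ε < a j := fun j => (half_lt_self ha₀).trans_le (hj₀ j)
  refine ⟨fun _ => N⁻¹, fun j => N * (a j - ε), fun _ => ε, fun j => b j,
    fun _ => inv_pos.mpr hN, ?_, fun j => mul_pos hN (sub_pos.mpr (hεa j)), fun _ => hε,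
    b.star_dotProduct_self, ?_⟩
  · simp [N]
  · rw [← b.sum_vecMulVec_self_star, ← sum_ofReal_smul_eq_uniform_average]
    exact hA.isHermitian.eq_sum_eigenvalues_smul_vecMulVec

theorem Matrix.exists_mem_unitaryGroup_smul_vecMulVec_add_smul_one_eq {𝕜 ι : Type*} [RCLike 𝕜]
    [Fintype ι] [DecidableEq ι] {u : ι → 𝕜} (hu : star u ⬝ᵥ u = 1) (i : ι) (c e : 𝕜) :
    ∃ U ∈ unitaryGroup ι 𝕜, c • vecMulVec u (star u) + e • 1 =
      Uᴴ * diagonal (fun j => if j = i then c + e else e) * U := by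
  obtain ⟨b, hb⟩ := EuclideanSpace.exists_orthonormalBasis_apply_eq hu i
  set V := (EuclideanSpace.basisFun ι 𝕜).toBasis.toMatrix b
  have hcol : ∀ j, V.col j = b j := fun _ => rfl
  refine ⟨Vᴴ, ?_, ?_⟩
  · exact Unitary.star_mem ((EuclideanSpace.basisFun ι 𝕜).toMatrix_orthonormalBasis_mem_unitary b)
  · rw [conjTranspose_conjTranspose, mul_diagonal_mul_conjTranspose_eq_sum]
    have hsplit : ∀ j, (if j = i then c + e else e) • vecMulVec (b j) (star (b j)) =
        (if j = i then c • vecMulVec (b j) (star (b j)) else 0) +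
          e • vecMulVec (b j) (star (b j)) := by
      intro j
      split_ifs <;> simp [add_smul]
    simp only [hcol]
    rw [Finset.sum_congr rfl fun j _ => hsplit j, Finset.sum_add_distrib, Finset.sum_ite_eq',
      if_pos (Finset.mem_univ i), ← Finset.smul_sum, b.sum_vecMulVec_self_star, hb]

/-- every positive invertible operator `A` on a finite-dimensional
Hilbert space `E` is a finite convex combination of operators of the form
`c·uuᴴ + d·I` with `c, d > 0` and `u` a unit vector; moreover each such
operator `c·uuᴴ + d·I` equals `Uᴴ ((c+d) ⊕ d·I) U` for a suitable unitary `U`. -/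
theorem stmt8 (n : ℕ) (hn : 0 < n) (A : Mat n) (hA : A.PosDef) :
    (∃ (m : ℕ) (t c e : Fin m → ℝ) (u : Fin m → (Fin n → ℂ)),
      (∀ j, 0 < t j) ∧ (∑ j, t j = 1) ∧ (∀ j, 0 < c j) ∧ (∀ j, 0 < e j) ∧
      (∀ j, star (u j) ⬝ᵥ u j = 1) ∧
      A = ∑ j, (t j : ℂ) •
        ((c j : ℂ) • Matrix.vecMulVec (u j) (star (u j)) + (e j : ℂ) • 1)) ∧
    (∀ (c e : ℝ), 0 < c → 0 < e → ∀ u : Fin n → ℂ, star u ⬝ᵥ u = 1 →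
      ∃ U ∈ Matrix.unitaryGroup (Fin n) ℂ,
        (c : ℂ) • Matrix.vecMulVec u (star u) + (e : ℂ) • 1 =
          Uᴴ * Matrix.diagonal
            (fun j => if j = (⟨0, hn⟩ : Fin n) then ((c + e : ℝ) : ℂ) else (e : ℂ)) * U) := by
  have : Nonempty (Fin n) := ⟨⟨0, hn⟩⟩
  refine ⟨⟨n, hA.exists_uniform_average_smul_vecMulVec_add_smul_one⟩, fun c e _ _ u hu => ?_⟩
  push_cast
  exact Matrix.exists_mem_unitaryGroup_smul_vecMulVec_add_smul_one_eq hu _ _ _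
end

section
/- Let (D(E)) be a self-adjoint matrix convex set with D(E) ⊆ A ⊗ B(E) for a Banach space A, and let F : D(E) → B(E) be a free function. Then F is operator concave (F((1-λ)X + λY) ≥ (1-λ)F(X) + λF(Y) for X, Y ∈ D(E), λ ∈ [0,1]) if and only if for each isometry W : E → K between Hilbert spaces and each X ∈ D(K), F((I_A ⊗ W*)X(I_A ⊗ W)) ≥ W*F(X)W. -/
open Matrix
open scoped ComplexOrder

/-- Direct sum of square matrices, realized on `Fin (d + d')`. -/
def dsumM {d d' : ℕ} (X : Mat d) (Y : Mat d') : Mat (d + d') :=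
  Matrix.reindex finSumFinEquiv finSumFinEquiv (Matrix.fromBlocks X 0 0 Y)

/-- A graded family of sets of `k`-tuples of matrices (the case `𝒜 = ℂᵏ`,
finite-dimensional `E`) is a self-adjoint matrix convex set: closed under
unitary conjugation, direct sums, isometric conjugation and the adjoint. -/
structure IsSAMatrixConvex (k : ℕ) (D : ∀ d : ℕ, Set (Fin k → Mat d)) : Prop where
  unitary : ∀ (d : ℕ) (U : Mat d), U ∈ Matrix.unitaryGroup (Fin d) ℂ →
    ∀ X ∈ D d, (fun i => Uᴴ * X i * U) ∈ D d
  dsum : ∀ (d d' : ℕ), ∀ X ∈ D d, ∀ Y ∈ D d',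
    (fun i => dsumM (X i) (Y i)) ∈ D (d + d')
  isom : ∀ (d d' : ℕ) (V : Matrix (Fin d') (Fin d) ℂ), Vᴴ * V = 1 →
    ∀ X ∈ D d', (fun i => Vᴴ * X i * V) ∈ D d
  selfAdj : ∀ (d : ℕ), ∀ X ∈ D d, (fun i => (X i)ᴴ) ∈ D d

/-- A graded family of functions is a free function on the domain `D`:
it preserves unitary conjugation and direct sums. -/
structure IsFreeFn (k : ℕ) (D : ∀ d : ℕ, Set (Fin k → Mat d))
    (F : ∀ d : ℕ, (Fin k → Mat d) → Mat d) : Prop where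
  unitary : ∀ (d : ℕ) (U : Mat d), U ∈ Matrix.unitaryGroup (Fin d) ℂ →
    ∀ X ∈ D d, F d (fun i => Uᴴ * X i * U) = Uᴴ * F d X * U
  dsum : ∀ (d d' : ℕ), ∀ X ∈ D d, ∀ Y ∈ D d',
    F (d + d') (fun i => dsumM (X i) (Y i)) = dsumM (F d X) (F d' Y)

/-- Operator concavity of a free function on `D`. -/
def IsOpConcave (k : ℕ) (D : ∀ d : ℕ, Set (Fin k → Mat d))
    (F : ∀ d : ℕ, (Fin k → Mat d) → Mat d) : Prop :=
  ∀ (d : ℕ), ∀ X ∈ D d, ∀ Y ∈ D d, ∀ t : ℝ, 0 ≤ t → t ≤ 1 →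
    Loewner (((1 - t : ℝ) : ℂ) • F d X + (t : ℂ) • F d Y)
      (F d (fun i => ((1 - t : ℝ) : ℂ) • X i + (t : ℂ) • Y i))

/-!
Hansen–Pedersen style. With `U = [[0, W*], [W, 1 - WW*]]`, Halmos' self-adjoint unitary dilation
of the isometry `W`, the upper-left corner of `U* (A ⊕ B) U` is `W* B W`. Applied to
`W*XW ⊕ X` and to `F(W*XW) ⊕ F(X)`, freeness reduces the forward direction to compressions onto
the first summand of `ℂᵈ ⊕ ℂᵈ'`. For those, the midpoint of `Z` and `SZS`, `S = 1 ⊕ -1`, is the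
block-diagonal part of `Z`: concavity at this midpoint, freeness and a compression give the
inequality. Conversely, the isometry `x ↦ √(1-t) x ⊕ √t x` compresses `X ⊕ Y` to `(1-t)X + tY`.
-/

section DirectSum

variable {d d' : ℕ}

def inlM (d d' : ℕ) : Matrix (Fin (d + d')) (Fin d) ℂ :=
  (fromRows (1 : Mat d) (0 : Matrix (Fin d') (Fin d) ℂ)).submatrix finSumFinEquiv.symm id

def inrM (d d' : ℕ) : Matrix (Fin (d + d')) (Fin d') ℂ :=
  (fromRows (0 : Matrix (Fin d) (Fin d') ℂ) (1 : Mat d')).submatrix finSumFinEquiv.symm id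

theorem conjTranspose_inlM :
    (inlM d d')ᴴ = (fromCols (1 : Mat d) 0).submatrix id finSumFinEquiv.symm := by
  simp [inlM, conjTranspose_submatrix, conjTranspose_fromRows_eq_fromCols_conjTranspose]

theorem conjTranspose_inrM :
    (inrM d d')ᴴ = (fromCols 0 (1 : Mat d')).submatrix id finSumFinEquiv.symm := by
  simp [inrM, conjTranspose_submatrix, conjTranspose_fromRows_eq_fromCols_conjTranspose]

@[simp] theorem conjTranspose_inlM_mul_inlM : (inlM d d')ᴴ * inlM d d' = 1 := by
  rw [conjTranspose_inlM, inlM, submatrix_mul_equiv, fromCols_mul_fromRows]; simp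

@[simp] theorem conjTranspose_inrM_mul_inrM : (inrM d d')ᴴ * inrM d d' = 1 := by
  rw [conjTranspose_inrM, inrM, submatrix_mul_equiv, fromCols_mul_fromRows]; simp

@[simp] theorem conjTranspose_inlM_mul_inrM : (inlM d d')ᴴ * inrM d d' = 0 := by
  rw [conjTranspose_inlM, inrM, submatrix_mul_equiv, fromCols_mul_fromRows]; simp

@[simp] theorem conjTranspose_inrM_mul_inlM : (inrM d d')ᴴ * inlM d d' = 0 := by
  rw [conjTranspose_inrM, inlM, submatrix_mul_equiv, fromCols_mul_fromRows]; simp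

theorem dsumM_eq_add (A : Mat d) (B : Mat d') :
    dsumM A B = inlM d d' * A * (inlM d d')ᴴ + inrM d d' * B * (inrM d d')ᴴ := by
  ext i j
  obtain ⟨i, rfl⟩ := finSumFinEquiv.surjective i
  obtain ⟨j, rfl⟩ := finSumFinEquiv.surjective j
  rcases i with i | i <;> rcases j with j | j <;>
    simp [dsumM, inlM, inrM, mul_apply, one_apply]

theorem dsumM_one : dsumM (1 : Mat d) (1 : Mat d') = 1 := by
  rw [dsumM, reindex_apply, fromBlocks_one, submatrix_one_equiv]

theorem dsumM_mul_inlM (A : Mat d) (B : Mat d') : dsumM A B * inlM d d' = inlM d d' * A := by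
  simp [dsumM_eq_add, Matrix.add_mul, Matrix.mul_assoc]

theorem dsumM_mul_inrM (A : Mat d) (B : Mat d') : dsumM A B * inrM d d' = inrM d d' * B := by
  simp [dsumM_eq_add, Matrix.add_mul, Matrix.mul_assoc]

@[simp] theorem conjTranspose_inlM_mul_dsumM_mul_inlM (A : Mat d) (B : Mat d') :
    (inlM d d')ᴴ * dsumM A B * inlM d d' = A := by
  simp [Matrix.mul_assoc, dsumM_mul_inlM, ← Matrix.mul_assoc _ (inlM d d')]

@[simp] theorem conjTranspose_inrM_mul_dsumM_mul_inrM (A : Mat d) (B : Mat d') :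
    (inrM d d')ᴴ * dsumM A B * inrM d d' = B := by
  simp [Matrix.mul_assoc, dsumM_mul_inrM, ← Matrix.mul_assoc _ (inrM d d')]

theorem dsumM_mul_dsumM (A A' : Mat d) (B B' : Mat d') :
    dsumM A B * dsumM A' B' = dsumM (A * A') (B * B') := by
  rw [dsumM_eq_add A', dsumM_eq_add (A * A')]
  simp only [Matrix.mul_add, ← Matrix.mul_assoc, dsumM_mul_inlM, dsumM_mul_inrM]

theorem conjTranspose_dsumM (A : Mat d) (B : Mat d') : (dsumM A B)ᴴ = dsumM Aᴴ Bᴴ := by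
  simp [dsumM_eq_add, conjTranspose_mul, Matrix.mul_assoc]

theorem dsumM_one_neg_one_mem_unitaryGroup :
    dsumM (1 : Mat d) (-1 : Mat d') ∈ unitaryGroup (Fin (d + d')) ℂ := by
  rw [mem_unitaryGroup_iff, star_eq_conjTranspose, conjTranspose_dsumM, dsumM_mul_dsumM]
  simpa using dsumM_one

theorem midpoint_conj_dsumM_one_neg_one (M : Mat (d + d')) :
    (1 / 2 : ℂ) • M + (1 / 2 : ℂ) • ((dsumM (1 : Mat d) (-1))ᴴ * M * dsumM 1 (-1)) =
      dsumM ((inlM d d')ᴴ * M * inlM d d') ((inrM d d')ᴴ * M * inrM d d') := by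
  have hP : inlM d d' * (inlM d d')ᴴ + inrM d d' * (inrM d d')ᴴ = 1 := by
    simpa [dsumM_eq_add] using dsumM_one (d := d) (d' := d')
  have pinching : ∀ p q : Mat (d + d'), p + q = 1 →
      (1 / 2 : ℂ) • M + (1 / 2 : ℂ) • ((p - q) * M * (p - q)) = p * M * p + q * M * q := by
    intro p q hpq
    obtain rfl : q = 1 - p := eq_sub_of_add_eq' hpq
    noncomm_ring
    module
  simp only [dsumM_eq_add]
  convert pinching _ _ hP using 1
  · simp [Matrix.mul_assoc, sub_eq_add_neg]
  · simp only [Matrix.mul_assoc]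

end DirectSum

section UnitaryDilation

variable {d d' : ℕ}

noncomputable def unitaryDilation (W : Matrix (Fin d') (Fin d) ℂ) : Mat (d + d') :=
  reindex finSumFinEquiv finSumFinEquiv (fromBlocks (0 : Mat d) Wᴴ W (1 - W * Wᴴ))

theorem conjTranspose_unitaryDilation (W : Matrix (Fin d') (Fin d) ℂ) :
    (unitaryDilation W)ᴴ = unitaryDilation W := by
  simp [unitaryDilation, conjTranspose_submatrix, fromBlocks_conjTranspose]

theorem unitaryDilation_mem_unitaryGroup {W : Matrix (Fin d') (Fin d) ℂ} (hW : Wᴴ * W = 1) :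
    unitaryDilation W ∈ unitaryGroup (Fin (d + d')) ℂ := by
  have hP : W * Wᴴ * (W * Wᴴ) = W * Wᴴ := by
    rw [Matrix.mul_assoc, ← Matrix.mul_assoc Wᴴ, hW, Matrix.one_mul]
  have hblocks : fromBlocks (0 : Mat d) Wᴴ W (1 - W * Wᴴ) * fromBlocks 0 Wᴴ W (1 - W * Wᴴ) = 1 := by
    rw [fromBlocks_multiply, ← fromBlocks_one]
    congr 1
    · simpa using hW
    · simp [Matrix.mul_sub, ← Matrix.mul_assoc, hW]
    · simp [Matrix.sub_mul, Matrix.mul_assoc, hW]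
    · rw [show (1 - W * Wᴴ) * (1 - W * Wᴴ) = 1 - W * Wᴴ - W * Wᴴ + W * Wᴴ * (W * Wᴴ) by
        noncomm_ring, hP]
      abel
  rw [mem_unitaryGroup_iff, star_eq_conjTranspose, conjTranspose_unitaryDilation, unitaryDilation,
    reindex_apply, submatrix_mul_equiv, hblocks, submatrix_one_equiv]

theorem unitaryDilation_mul_inlM (W : Matrix (Fin d') (Fin d) ℂ) :
    unitaryDilation W * inlM d d' = inrM d d' * W := by
  ext i j
  obtain ⟨i, rfl⟩ := finSumFinEquiv.surjective i
  rcases i with i | i <;> simp [unitaryDilation, inlM, inrM, mul_apply, one_apply, Fin.sum_univ_add]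

theorem compress_unitaryDilation_conj_dsumM (W : Matrix (Fin d') (Fin d) ℂ) (A : Mat d)
    (B : Mat d') :
    (inlM d d')ᴴ * ((unitaryDilation W)ᴴ * dsumM A B * unitaryDilation W) * inlM d d' =
      Wᴴ * B * W := by
  calc _ = (unitaryDilation W * inlM d d')ᴴ * dsumM A B * (unitaryDilation W * inlM d d') := by
        simp only [conjTranspose_mul, Matrix.mul_assoc]
    _ = Wᴴ * ((inrM d d')ᴴ * dsumM A B * inrM d d') * W := by
        rw [unitaryDilation_mul_inlM]; simp only [conjTranspose_mul, Matrix.mul_assoc]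
    _ = Wᴴ * B * W := by rw [conjTranspose_inrM_mul_dsumM_mul_inrM]

end UnitaryDilation

theorem Loewner.conjTranspose_mul_mul_same {d e : ℕ} {A B : Mat d} (h : Loewner A B)
    (V : Matrix (Fin d) (Fin e) ℂ) : Loewner (Vᴴ * A * V) (Vᴴ * B * V) := by
  unfold Loewner at h ⊢
  simpa [Matrix.mul_sub, Matrix.sub_mul] using h.conjTranspose_mul_mul_same V

theorem dsumM_conj_real_inlM_add_inrM {d : ℕ} (a b : ℝ) (A B : Mat d) :
    ((a : ℂ) • inlM d d + (b : ℂ) • inrM d d)ᴴ * dsumM A B *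
        ((a : ℂ) • inlM d d + (b : ℂ) • inrM d d) =
      ((a ^ 2 : ℝ) : ℂ) • A + ((b ^ 2 : ℝ) : ℂ) • B := by
  rw [Matrix.mul_assoc]
  simp only [Matrix.mul_add, Matrix.mul_smul, dsumM_mul_inlM, dsumM_mul_inrM]
  simp [Matrix.add_mul, ← Matrix.mul_assoc, smul_smul, sq, -Complex.ofReal_mul, Complex.coe_smul]

section FreeFunction

variable {k : ℕ} {D : ∀ d : ℕ, Set (Fin k → Mat d)} {F : ∀ d : ℕ, (Fin k → Mat d) → Mat d}

theorem IsOpConcave.loewner_compress_inlM (hconc : IsOpConcave k D F) (hD : IsSAMatrixConvex k D)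
    (hF : IsFreeFn k D F) {d d' : ℕ} {Z : Fin k → Mat (d + d')} (hZ : Z ∈ D (d + d')) :
    Loewner ((inlM d d')ᴴ * F (d + d') Z * inlM d d')
      (F d fun i => (inlM d d')ᴴ * Z i * inlM d d') := by
  have hS : dsumM (1 : Mat d) (-1 : Mat d') ∈ unitaryGroup (Fin (d + d')) ℂ :=
    dsumM_one_neg_one_mem_unitaryGroup
  have hmid := hconc _ Z hZ _ (hD.unitary _ _ hS Z hZ) (1 / 2) (by norm_num) (by norm_num)
  have half : ((1 - 1 / 2 : ℝ) : ℂ) = 1 / 2 ∧ ((1 / 2 : ℝ) : ℂ) = 1 / 2 := by norm_num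
  rw [half.1, half.2, hF.unitary _ _ hS Z hZ] at hmid
  simp only [midpoint_conj_dsumM_one_neg_one] at hmid
  rw [hF.dsum _ _ _ (hD.isom _ _ _ conjTranspose_inlM_mul_inlM Z hZ) _
    (hD.isom _ _ _ conjTranspose_inrM_mul_inrM Z hZ)] at hmid
  simpa using hmid.conjTranspose_mul_mul_same (inlM d d')

theorem IsOpConcave.loewner_compress (hconc : IsOpConcave k D F) (hD : IsSAMatrixConvex k D)
    (hF : IsFreeFn k D F) {d d' : ℕ} {W : Matrix (Fin d') (Fin d) ℂ} (hW : Wᴴ * W = 1)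
    {X : Fin k → Mat d'} (hX : X ∈ D d') :
    Loewner (Wᴴ * F d' X * W) (F d fun i => Wᴴ * X i * W) := by
  have hY := hD.isom d d' W hW X hX
  have hU := unitaryDilation_mem_unitaryGroup hW
  have hYX := hD.dsum d d' _ hY X hX
  have h := hconc.loewner_compress_inlM hD hF (hD.unitary _ _ hU _ hYX)
  rw [hF.unitary _ _ hU _ hYX, hF.dsum _ _ _ hY _ hX, compress_unitaryDilation_conj_dsumM] at h
  simpa only [compress_unitaryDilation_conj_dsumM] using h

theorem isOpConcave_of_loewner_compress (hD : IsSAMatrixConvex k D) (hF : IsFreeFn k D F)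
    (h : ∀ (d d' : ℕ) (W : Matrix (Fin d') (Fin d) ℂ), Wᴴ * W = 1 →
      ∀ X ∈ D d', Loewner (Wᴴ * F d' X * W) (F d fun i => Wᴴ * X i * W)) :
    IsOpConcave k D F := by
  intro d X hX Y hY t ht0 ht1
  set W := ((√(1 - t) : ℝ) : ℂ) • inlM d d + ((√t : ℝ) : ℂ) • inrM d d
  have hW (A B : Mat d) : Wᴴ * dsumM A B * W = ((1 - t : ℝ) : ℂ) • A + (t : ℂ) • B := by
    rw [dsumM_conj_real_inlM_add_inrM, Real.sq_sqrt (by linarith), Real.sq_sqrt ht0]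
  have hWW : Wᴴ * W = 1 := by
    have h11 := hW 1 1
    rwa [dsumM_one, Matrix.mul_one, ← add_smul, ← Complex.ofReal_add, sub_add_cancel,
      Complex.ofReal_one, one_smul] at h11
  have hXY := hD.dsum d d X hX Y hY
  simpa only [hF.dsum d d X hX Y hY, hW] using h d (d + d) W hWW _ hXY

end FreeFunction

/-- a free function `F` on a self-adjoint matrix convex domain
`(D(E))` is operator concave if and only if for every isometry `W : E → K` and
every `X ∈ D(K)` one has `F(Wᴴ X W) ≥ Wᴴ F(X) W`. -/
theorem stmt11 (k : ℕ) (D : ∀ d : ℕ, Set (Fin k → Mat d))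
    (F : ∀ d : ℕ, (Fin k → Mat d) → Mat d)
    (hD : IsSAMatrixConvex k D) (hF : IsFreeFn k D F) :
    IsOpConcave k D F ↔
      ∀ (d d' : ℕ) (W : Matrix (Fin d') (Fin d) ℂ), Wᴴ * W = 1 →
        ∀ X ∈ D d', Loewner (Wᴴ * F d' X * W) (F d (fun i => Wᴴ * X i * W)) :=
  ⟨fun hconc _ _ _ hW _ hX => hconc.loewner_compress hD hF hW hX,
    isOpConcave_of_loewner_compress hD hF⟩
end

section
/- Let L(X) = B₀ ⊗ I_E + Σᵢ Bᵢ ⊗ (Xᵢ - I_E) be a linear pencil with 0 ≤ Bᵢ ∈ B(K) for 1 ≤ i ≤ k and B₀ ≥ Σᵢ Bᵢ, and let e ∈ K be a unit vector. Then the function f(X) = (e ⊗ I_E) S_{e* ⊗ E}(L(X)) (e* ⊗ I_E), defined for k-tuples X of positive definite operators on a finite-dimensional E for which L(X) > 0, is operator monotone: X ≤ Y coordinatewise implies f(X) ≤ f(Y). -/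
/-
The pencil is monotone in `X` because every `Bᵢ ⊗ (Yᵢ - Xᵢ)` is positive semidefinite, and
`Z ↦ ((e ⊗ I)ᴴ Z⁻¹ (e ⊗ I))⁻¹` is monotone on `Z > 0`: two order-reversing inversions around an
order-preserving compression by the injective map `e ⊗ I`.
-/

open Matrix
open scoped ComplexOrder Kronecker

/-- The linear pencil `L(X) = B₀ ⊗ I_E + Σᵢ Bᵢ ⊗ (Xᵢ - I_E)` acting on `K ⊗ E`. -/
noncomputable def pencil {p k d : ℕ} (B₀ : Mat p) (B : Fin k → Mat p)
    (X : Fin k → Mat d) : Matrix (Fin p × Fin d) (Fin p × Fin d) ℂ :=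
  B₀ ⊗ₖ (1 : Mat d) + ∑ i, (B i) ⊗ₖ (X i - 1)

/-- The isometric embedding `E → K ⊗ E`, `v ↦ e ⊗ v`, as a matrix. -/
noncomputable def embedE {p d : ℕ} (e : Fin p → ℂ) :
    Matrix (Fin p × Fin d) (Fin d) ℂ :=
  fun q j => e q.1 * (1 : Mat d) q.2 j

/-- The Schur complement of a positive definite `Z` on `K ⊗ E` pivoting on the
subspace `e ⊗ E`, compressed back to `E`: `S_{e*⊗E}(Z) = ((e ⊗ I)ᴴ Z⁻¹ (e ⊗ I))⁻¹`. -/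
noncomputable def schurPivot {p d : ℕ} (e : Fin p → ℂ)
    (Z : Matrix (Fin p × Fin d) (Fin p × Fin d) ℂ) : Mat d :=
  ((embedE (d := d) e)ᴴ * Z⁻¹ * embedE (d := d) e)⁻¹

open scoped MatrixOrder Matrix.Norms.L2Operator

namespace Matrix

variable {n m : Type*} [Fintype n] [DecidableEq n]

theorem PosDef.of_le {A B : Matrix n n ℂ} (hA : A.PosDef) (hAB : A ≤ B) : B.PosDef :=
  (hA.isStrictlyPositive.of_le hAB).posDef

theorem inv_le_inv_of_le {A B : Matrix n n ℂ} (hA : A.PosDef) (hAB : A ≤ B) : B⁻¹ ≤ A⁻¹ := by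
  simpa only [nonsing_inv_eq_ringInverse] using
    CStarAlgebra.ringInverse_le_ringInverse hAB hA.isStrictlyPositive

omit [DecidableEq n] in
theorem conjTranspose_mul_mul_le_conjTranspose_mul_mul {𝕜 : Type*} [RCLike 𝕜] [Fintype m]
    {A B : Matrix n n 𝕜} (hAB : A ≤ B) (C : Matrix n m 𝕜) : Cᴴ * A * C ≤ Cᴴ * B * C := by
  rw [le_iff, ← Matrix.sub_mul, ← Matrix.mul_sub]
  exact hAB.conjTranspose_mul_mul_same C

theorem inv_conjTranspose_mul_inv_mul_le_of_le [Fintype m] [DecidableEq m]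
    {Z₁ Z₂ : Matrix n n ℂ} (hZ₁ : Z₁.PosDef) (hZ : Z₁ ≤ Z₂) {C : Matrix n m ℂ}
    (hC : Function.Injective C.mulVec) : (Cᴴ * Z₁⁻¹ * C)⁻¹ ≤ (Cᴴ * Z₂⁻¹ * C)⁻¹ :=
  inv_le_inv_of_le ((hZ₁.of_le hZ).inv.conjTranspose_mul_mul_same hC)
    (conjTranspose_mul_mul_le_conjTranspose_mul_mul (inv_le_inv_of_le hZ₁ hZ) C)

end Matrix

section Pencil

variable {p k d : ℕ} (B₀ : Mat p) (B : Fin k → Mat p) (X Y : Fin k → Mat d)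

theorem pencil_sub_pencil : pencil B₀ B Y - pencil B₀ B X = ∑ i, B i ⊗ₖ (Y i - X i) := by
  simp only [pencil, add_sub_add_left_eq_sub, ← Finset.sum_sub_distrib]
  refine Finset.sum_congr rfl fun i _ => ?_
  ext
  simp [mul_sub]

variable {B₀ B X Y}

theorem pencil_mono (hB : ∀ i, (B i).PosSemidef) (hXY : ∀ i, X i ≤ Y i) :
    pencil B₀ B X ≤ pencil B₀ B Y := by
  rw [← sub_nonneg, pencil_sub_pencil]
  exact Finset.sum_nonneg fun i _ => ((hB i).kronecker (hXY i)).nonneg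

end Pencil

theorem embedE_mulVec_apply {p d : ℕ} (e : Fin p → ℂ) (v : Fin d → ℂ) (q : Fin p × Fin d) :
    (embedE e *ᵥ v) q = e q.1 * v q.2 := by
  simp [embedE, mulVec, dotProduct, one_apply]

theorem embedE_mulVec_injective {p d : ℕ} {e : Fin p → ℂ} (he : e ≠ 0) :
    Function.Injective (embedE (d := d) e).mulVec := by
  obtain ⟨i, hi⟩ := Function.ne_iff.mp he
  intro v w hvw
  funext j
  have := congrFun hvw (i, j)
  rw [embedE_mulVec_apply, embedE_mulVec_apply] at this
  exact mul_left_cancel₀ hi this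

theorem schurPivot_le_schurPivot {p d : ℕ} {e : Fin p → ℂ} (he : e ≠ 0)
    {Z₁ Z₂ : Matrix (Fin p × Fin d) (Fin p × Fin d) ℂ} (hZ₁ : Z₁.PosDef) (hZ : Z₁ ≤ Z₂) :
    schurPivot e Z₁ ≤ schurPivot e Z₂ :=
  inv_conjTranspose_mul_inv_mul_le_of_le hZ₁ hZ (embedE_mulVec_injective he)

theorem stmt15_general (p k d : ℕ) (B₀ : Mat p) (B : Fin k → Mat p)
    (hB : ∀ i, (B i).PosSemidef)
    (e : Fin p → ℂ) (he : star e ⬝ᵥ e = 1)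
    (X Y : Fin k → Mat d)
    (hLX : (pencil B₀ B X).PosDef)
    (hXY : ∀ i, Loewner (X i) (Y i)) :
    Loewner (schurPivot e (pencil B₀ B X)) (schurPivot e (pencil B₀ B Y)) := by
  have he₀ : e ≠ 0 := by
    rintro rfl
    simp at he
  exact schurPivot_le_schurPivot he₀ hLX (pencil_mono hB hXY)

/-- for a linear pencil `L(X) = B₀ ⊗ I + Σ Bᵢ ⊗ (Xᵢ - I)` with
`Bᵢ ≥ 0` and `B₀ ≥ Σ Bᵢ`, and a unit vector `e ∈ K`, the function
`f(X) = (e ⊗ I) S_{e*⊗E}(L(X)) (e* ⊗ I)`, defined for `k`-tuples `X` of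
positive definite operators with `L(X) > 0`, is operator monotone. -/
theorem stmt15 (p k d : ℕ) (B₀ : Mat p) (B : Fin k → Mat p)
    (hB : ∀ i, (B i).PosSemidef) (hB₀ : (B₀ - ∑ i, B i).PosSemidef)
    (e : Fin p → ℂ) (he : star e ⬝ᵥ e = 1)
    (X Y : Fin k → Mat d)
    (hX : ∀ i, (X i).PosDef) (hY : ∀ i, (Y i).PosDef)
    (hLX : (pencil B₀ B X).PosDef) (hLY : (pencil B₀ B Y).PosDef)
    (hXY : ∀ i, Loewner (X i) (Y i)) :
    Loewner (schurPivot e (pencil B₀ B X)) (schurPivot e (pencil B₀ B Y)) :=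
  stmt15_general p k d B₀ B hB e he X Y hLX hXY
end

section
/- Let F = (F_n) be an operator mean of discrete probability measures, i.e., each F_n : P(E)^n → P(E) is an operator monotone free function, F_n is invariant under permutations of its arguments, and F_{nk}(X₁ repeated k times, ..., X_n repeated k times) = F_n(X₁,...,X_n). Then F preserves direct sums of discrete probability measures with rational weights in the coupling sense: for μ = Σᵢ (1/n)δ_{Xᵢ} on P(E) and ν = Σⱼ (1/k)δ_{Yⱼ} on P(K), and for any coupling γ of μ and ν (a probability measure on P(E⊕K) supported on {Xᵢ ⊕ Yⱼ} with marginals μ, ν), one has F(γ) = F(μ) ⊕ F(ν). -/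
open Matrix
open scoped ComplexOrder

lemma exists_perm_comp {N n : ℕ} (f f' : Fin N → Fin n)
    (h : ∀ i, Fintype.card {m // f m = i} = Fintype.card {m // f' m = i}) :
    ∃ σ : Equiv.Perm (Fin N), ∀ m, f' (σ m) = f m := by
  have e : ∀ i, {m // f m = i} ≃ {m // f' m = i} := fun i => Fintype.equivOfCardEq (h i)
  exact ⟨Equiv.ofFiberEquiv e, fun m => Equiv.ofFiberEquiv_map e m⟩

lemma card_fiber_divNat (n c : ℕ) (i : Fin n) :
    Fintype.card {m : Fin (n * c) // Fin.divNat m = i} = c := by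
  have e1 : {m : Fin (n * c) // Fin.divNat m = i} ≃ {q : Fin n × Fin c // q.1 = i} :=
    Equiv.subtypeEquiv finProdFinEquiv.symm (by intro m; simp [finProdFinEquiv])
  have e2 : {q : Fin n × Fin c // q.1 = i} ≃ Fin c :=
    { toFun := fun q => q.1.2
      invFun := fun b => ⟨(i, b), rfl⟩
      left_inv := by rintro ⟨⟨a, b⟩, rfl⟩; rfl
      right_inv := fun b => rfl }
  rw [Fintype.card_congr (e1.trans e2), Fintype.card_fin]

lemma F_comp {F : ∀ d n : ℕ, (Fin n → Mat d) → Mat d}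
    (hperm : ∀ d n (σ : Equiv.Perm (Fin n)) (X : Fin n → Mat d),
      (∀ i, (X i).PosDef) → F d n (fun i => X (σ i)) = F d n X)
    (hrep : ∀ d n k (X : Fin n → Mat d), (∀ i, (X i).PosDef) →
      F d (n * k) (fun m => X m.divNat) = F d n X)
    (d n N c : ℕ) (hc : n * c = N)
    (X : Fin n → Mat d) (hX : ∀ i, (X i).PosDef)
    (f : Fin N → Fin n)
    (hf : ∀ i, Fintype.card {m // f m = i} = c) :
    F d N (fun m => X (f m)) = F d n X := by
  subst hc
  obtain ⟨σ, hσ⟩ := exists_perm_comp f (fun m => Fin.divNat m)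
    (fun i => by rw [hf i, card_fiber_divNat])
  have h1 := hperm d (n * c) σ.symm (fun m => X (f m)) (fun m => hX _)
  have h2 : (fun m => X (f (σ.symm m))) = fun m : Fin (n * c) => X m.divNat := by
    funext m
    have := hσ (σ.symm m)
    simp only [Equiv.apply_symm_apply] at this
    rw [← this]
  rw [h2] at h1
  rw [← h1, hrep d n c X hX]

/-- let `F = (F_n)` be an operator mean of discrete probability
measures: each `F_n : P(E)^n → P(E)` is an operator monotone free function
(positive-valued, unitarily invariant, direct-sum preserving, Loewner-order
monotone), permutation invariant, and invariant under `k`-fold repetition of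
the arguments. Then `F` preserves direct sums of discrete probability measures
with rational weights in the coupling sense: for uniform discrete measures
`μ = Σᵢ (1/n) δ_{Xᵢ}` on `P(E)` and `ν = Σⱼ (1/k') δ_{Yⱼ}` on `P(K)` and any
coupling `γ` of `μ, ν` — given by multiplicities `p i j / N` with row sums
`1/n` and column sums `1/k'`, enumerated with multiplicity by
`g : Fin N → Fin n × Fin k'` — one has `F(γ) = F(μ) ⊕ F(ν)`. -/
theorem stmt19
    (F : ∀ d n : ℕ, (Fin n → Mat d) → Mat d)
    (hpos : ∀ d n (X : Fin n → Mat d), (∀ i, (X i).PosDef) → (F d n X).PosDef)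
    (hunitary : ∀ d n (U : Mat d), U ∈ Matrix.unitaryGroup (Fin d) ℂ →
      ∀ X : Fin n → Mat d, (∀ i, (X i).PosDef) →
        F d n (fun i => Uᴴ * X i * U) = Uᴴ * F d n X * U)
    (hdsum : ∀ d d' n (X : Fin n → Mat d) (Y : Fin n → Mat d'),
      (∀ i, (X i).PosDef) → (∀ i, (Y i).PosDef) →
        F (d + d') n (fun i => dsumM (X i) (Y i)) = dsumM (F d n X) (F d' n Y))
    (hmono : ∀ d n (X Y : Fin n → Mat d), (∀ i, (X i).PosDef) →
      (∀ i, (Y i).PosDef) → (∀ i, Loewner (X i) (Y i)) →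
        Loewner (F d n X) (F d n Y))
    (hperm : ∀ d n (σ : Equiv.Perm (Fin n)) (X : Fin n → Mat d),
      (∀ i, (X i).PosDef) → F d n (fun i => X (σ i)) = F d n X)
    (hrep : ∀ d n k (X : Fin n → Mat d), (∀ i, (X i).PosDef) →
      F d (n * k) (fun m => X m.divNat) = F d n X)
    -- the coupling data
    (d d' n k' N : ℕ) (hn : 0 < n) (hk' : 0 < k') (hN : 0 < N)
    (X : Fin n → Mat d) (hX : ∀ i, (X i).PosDef)
    (Y : Fin k' → Mat d') (hY : ∀ j, (Y j).PosDef)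
    (p : Fin n → Fin k' → ℕ)
    (hrow : ∀ i, (∑ j, p i j) * n = N)
    (hcol : ∀ j, (∑ i, p i j) * k' = N)
    (g : Fin N → Fin n × Fin k')
    (hg : ∀ i j, (Finset.univ.filter (fun m : Fin N => g m = (i, j))).card = p i j) :
    F (d + d') N (fun m => dsumM (X (g m).1) (Y (g m).2)) =
      dsumM (F d n X) (F d' k' Y) := by
  -- fiber counts of the two marginal enumerations
  have hfib1 : ∀ i, Fintype.card {m // (g m).1 = i} = ∑ j, p i j := by
    intro i
    rw [Fintype.card_subtype]
    rw [Finset.card_eq_sum_card_fiberwise (f := fun m => (g m).2) (t := Finset.univ)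
      (fun m _ => Finset.mem_univ _)]
    refine Finset.sum_congr rfl fun j _ => ?_
    rw [← hg i j, Finset.filter_filter]
    congr 1
    ext m
    simp [Prod.ext_iff]
  have hfib2 : ∀ j, Fintype.card {m // (g m).2 = j} = ∑ i, p i j := by
    intro j
    rw [Fintype.card_subtype]
    rw [Finset.card_eq_sum_card_fiberwise (f := fun m => (g m).1) (t := Finset.univ)
      (fun m _ => Finset.mem_univ _)]
    refine Finset.sum_congr rfl fun i _ => ?_
    rw [← hg i j, Finset.filter_filter]
    congr 1
    ext m
    simp [Prod.ext_iff, and_comm]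
  -- constant row and column sums
  set c : ℕ := ∑ j, p ⟨0, hn⟩ j with hc_def
  have hrowc : ∀ i, (∑ j, p i j) = c :=
    fun i => Nat.eq_of_mul_eq_mul_right hn ((hrow i).trans (hrow ⟨0, hn⟩).symm)
  set c' : ℕ := ∑ i, p i ⟨0, hk'⟩ with hc'_def
  have hcolc : ∀ j, (∑ i, p i j) = c' :=
    fun j => Nat.eq_of_mul_eq_mul_right hk' ((hcol j).trans (hcol ⟨0, hk'⟩).symm)
  have hnc : n * c = N := by rw [Nat.mul_comm]; exact hrow ⟨0, hn⟩
  have hkc : k' * c' = N := by rw [Nat.mul_comm]; exact hcol ⟨0, hk'⟩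
  have key := hdsum d d' N (fun m => X (g m).1) (fun m => Y (g m).2)
    (fun m => hX _) (fun m => hY _)
  calc F (d + d') N (fun m => dsumM (X (g m).1) (Y (g m).2))
      = dsumM (F d N fun m => X (g m).1) (F d' N fun m => Y (g m).2) := key
    _ = dsumM (F d n X) (F d' k' Y) := by
        rw [F_comp hperm hrep d n N c hnc X hX (fun m => (g m).1)
              (fun i => (hfib1 i).trans (hrowc i)),
            F_comp hperm hrep d' k' N c' hkc Y hY (fun m => (g m).2)
              (fun j => (hfib2 j).trans (hcolc j))]
end
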